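/- arXiv:2206.01426 — 8 statements merged into one kernel-verified Lean document; each statement's English description precedes it below -/
import Mathlib

section
/- Let d_a, d_y ≥ 1, let ℓ : ℝ^{d_y} → ℝ be 1-Lipschitz, let Q⋆, Q̂ ∈ ℝ^{d_y×d_a}, let V ∈ ℝ^{d_a×d_a} be positive definite, and let α ≥ 0. Define the optimistic loss f°(a) = ℓ(Q̂ a) − α ‖V^{−1/2} a‖_∞. If √d_a · ‖(Q̂ − Q⋆) V^{1/2}‖ ≤ α, then for every a ∈ ℝ^{d_a}: f°(a) ≤ ℓ(Q⋆ a) ≤ f°(a) + 2α √(aᵀ V^{−1} a). -/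
open scoped BigOperators

noncomputable section

/-- The spectral (ℓ₂ operator) norm of a real matrix. -/
noncomputable def specNorm {m n : Type*} [Fintype m] [Fintype n] [DecidableEq n]
    (A : Matrix m n ℝ) : ℝ :=
  ‖LinearMap.toContinuousLinearMap (Matrix.toEuclideanLin A)‖

open Matrix

lemma psd_isUnit_posDef {n : Type*} [Fintype n] [DecidableEq n] {M : Matrix n n ℝ}
    (hM : M.PosSemidef) (hU : IsUnit M) : M.PosDef := by
  exact hM.posDef_iff_isUnit.mpr hU

lemma spec_bound {m n : ℕ} (M : Matrix (Fin m) (Fin n) ℝ) (x : Fin n → ℝ) :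
    Real.sqrt (∑ i, (M.mulVec x i) ^ 2) ≤ specNorm M * Real.sqrt (∑ j, (x j) ^ 2) := by
  have h := (LinearMap.toContinuousLinearMap (Matrix.toEuclideanLin M)).le_opNorm
    ((WithLp.equiv 2 (Fin n → ℝ)).symm x)
  have e1 : (LinearMap.toContinuousLinearMap (Matrix.toEuclideanLin M))
      ((WithLp.equiv 2 (Fin n → ℝ)).symm x)
      = (WithLp.equiv 2 (Fin m → ℝ)).symm (M.mulVec x) := by
    simp [Matrix.toEuclideanLin_apply]
  rw [e1] at h
  have n1 : ‖(WithLp.equiv 2 (Fin m → ℝ)).symm (M.mulVec x)‖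
      = Real.sqrt (∑ i, (M.mulVec x i) ^ 2) := by
    rw [EuclideanSpace.norm_eq]
    congr 1
    refine Finset.sum_congr rfl fun i _ => ?_
    simp [Real.norm_eq_abs, sq_abs]
  have n2 : ‖(WithLp.equiv 2 (Fin n → ℝ)).symm x‖ = Real.sqrt (∑ j, (x j) ^ 2) := by
    rw [EuclideanSpace.norm_eq]
    congr 1
    refine Finset.sum_congr rfl fun i _ => ?_
    simp [Real.norm_eq_abs, sq_abs]
  rw [n1, n2] at h
  exact h

/-- Optimism: if `√d_a ‖(Q̂ − Q⋆) V^{1/2}‖ ≤ α`, then the optimistic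
loss `f°(a) = ℓ(Q̂ a) − α ‖V^{−1/2} a‖_∞` satisfies
`f°(a) ≤ ℓ(Q⋆ a) ≤ f°(a) + 2α √(aᵀ V⁻¹ a)` for every `a`.
Here `Vsqrt` and `Vinvsqrt` are the positive semidefinite square roots of `V` and `V⁻¹`. -/
theorem optimism_bound (da dy : ℕ) (hda : 1 ≤ da) (hdy : 1 ≤ dy)
    (ℓ : (Fin dy → ℝ) → ℝ)
    (hℓ : ∀ x y : Fin dy → ℝ, |ℓ x - ℓ y| ≤ Real.sqrt (∑ i, (x i - y i) ^ 2))
    (Qstar Qhat : Matrix (Fin dy) (Fin da) ℝ)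
    (V : Matrix (Fin da) (Fin da) ℝ) (hV : V.PosDef)
    (α : ℝ) (hα : 0 ≤ α)
    (Vsqrt : Matrix (Fin da) (Fin da) ℝ)
    (hVsqrtPSD : Vsqrt.PosSemidef) (hVsqrt : Vsqrt * Vsqrt = V)
    (Vinvsqrt : Matrix (Fin da) (Fin da) ℝ)
    (hVinvsqrtPSD : Vinvsqrt.PosSemidef) (hVinvsqrt : Vinvsqrt * Vinvsqrt = V⁻¹)
    (hest : Real.sqrt da * specNorm ((Qhat - Qstar) * Vsqrt) ≤ α)
    (a : Fin da → ℝ) :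
    ℓ (Qhat.mulVec a) - α * (⨆ k, |Vinvsqrt.mulVec a k|) ≤ ℓ (Qstar.mulVec a) ∧
      ℓ (Qstar.mulVec a) ≤
        ℓ (Qhat.mulVec a) - α * (⨆ k, |Vinvsqrt.mulVec a k|) +
          2 * α * Real.sqrt (dotProduct a (V⁻¹.mulVec a)) := by
  haveI : NeZero da := ⟨by omega⟩
  -- Vsqrt is invertible and positive definite
  have hVdet : IsUnit V.det := isUnit_iff_ne_zero.mpr hV.det_pos.ne'
  have hVsqrtdet : IsUnit Vsqrt.det := by
    have : Vsqrt.det * Vsqrt.det = V.det := by rw [← Matrix.det_mul, hVsqrt]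
    rcases hVdet with ⟨u, hu⟩
    exact isUnit_iff_ne_zero.mpr (fun h => by simp [h, ← hu] at this; exact u.ne_zero this.symm)
  have hVsqrtPD : Vsqrt.PosDef :=
    psd_isUnit_posDef hVsqrtPSD (Matrix.isUnit_iff_isUnit_det _ |>.mpr hVsqrtdet)
  -- Vinvsqrt = Vsqrt⁻¹
  have hinv_eq : Vinvsqrt = Vsqrt⁻¹ := by
    open scoped MatrixOrder in
    refine (CFC.sq_eq_sq_iff _ _ hVinvsqrtPSD.nonneg hVsqrtPD.inv.posSemidef.nonneg).mp ?_
    rw [pow_two, pow_two, hVinvsqrt, ← Matrix.mul_inv_rev, hVsqrt]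
  -- hence Vsqrt *ᵥ (Vinvsqrt *ᵥ a) = a
  set w : Fin da → ℝ := Vinvsqrt.mulVec a with hw
  have hrecover : Vsqrt.mulVec w = a := by
    rw [hw, Matrix.mulVec_mulVec, hinv_eq, Matrix.mul_nonsing_inv _ hVsqrtdet,
      Matrix.one_mulVec]
  -- the sup
  set s : ℝ := ⨆ k, |w k| with hs
  have hbdd : BddAbove (Set.range fun k => |w k|) := Set.Finite.bddAbove (Set.finite_range _)
  have hs_le : ∀ k, |w k| ≤ s := fun k => le_ciSup hbdd k
  have hs_nonneg : 0 ≤ s := le_trans (abs_nonneg _) (hs_le ⟨0, by omega⟩)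
  -- Euclidean norm of w
  have hw2 : ∀ k, |w k| ≤ Real.sqrt (∑ j, (w j) ^ 2) := by
    intro k
    rw [← Real.sqrt_sq_eq_abs]
    exact Real.sqrt_le_sqrt (Finset.single_le_sum (f := fun j => (w j)^2)
      (fun j _ => sq_nonneg _) (Finset.mem_univ k))
  have hs_le_norm : s ≤ Real.sqrt (∑ j, (w j) ^ 2) := ciSup_le hw2
  have hnorm_le : Real.sqrt (∑ j, (w j) ^ 2) ≤ Real.sqrt da * s := by
    rw [← Real.sqrt_sq hs_nonneg, ← Real.sqrt_mul (Nat.cast_nonneg da)]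
    apply Real.sqrt_le_sqrt
    calc ∑ j, (w j) ^ 2 ≤ ∑ _j : Fin da, s ^ 2 := by
          refine Finset.sum_le_sum fun j _ => ?_
          rw [← sq_abs]
          exact pow_le_pow_left₀ (abs_nonneg _) (hs_le j) 2
    _ = da * s ^ 2 := by simp [Finset.sum_const, nsmul_eq_mul]
  -- dot product identity
  have hdot : dotProduct a (V⁻¹.mulVec a) = ∑ j, (w j) ^ 2 := by
    have hsym : Vinvsqrtᵀ = Vinvsqrt := by
      have := hVinvsqrtPSD.1
      rwa [Matrix.IsHermitian, Matrix.conjTranspose_eq_transpose_of_trivial] at this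
    rw [← hVinvsqrt, ← Matrix.mulVec_mulVec, Matrix.dotProduct_mulVec,
      ← Matrix.mulVec_transpose, hsym, ← hw]
    simp [dotProduct, sq]
  -- the key Lipschitz bound
  have hkey : |ℓ (Qhat.mulVec a) - ℓ (Qstar.mulVec a)| ≤ α * s := by
    have h1 := hℓ (Qhat.mulVec a) (Qstar.mulVec a)
    have h2' : ((Qhat - Qstar) * Vsqrt).mulVec w = (Qhat - Qstar).mulVec a := by
      rw [← Matrix.mulVec_mulVec, hrecover]
    have h2 : ∀ i, Qhat.mulVec a i - Qstar.mulVec a i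
        = ((Qhat - Qstar) * Vsqrt).mulVec w i := by
      intro i
      rw [h2', Matrix.sub_mulVec]
      rfl
    have h3 : |ℓ (Qhat.mulVec a) - ℓ (Qstar.mulVec a)|
        ≤ Real.sqrt (∑ i, (((Qhat - Qstar) * Vsqrt).mulVec w i) ^ 2) := by
      refine le_trans h1 (le_of_eq ?_)
      congr 1
      exact Finset.sum_congr rfl fun i _ => by rw [h2 i]
    refine le_trans h3 ?_
    refine le_trans (spec_bound _ w) ?_
    calc specNorm ((Qhat - Qstar) * Vsqrt) * Real.sqrt (∑ j, (w j) ^ 2)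
        ≤ specNorm ((Qhat - Qstar) * Vsqrt) * (Real.sqrt da * s) := by
          exact mul_le_mul_of_nonneg_left hnorm_le (norm_nonneg _)
    _ = (Real.sqrt da * specNorm ((Qhat - Qstar) * Vsqrt)) * s := by ring
    _ ≤ α * s := mul_le_mul_of_nonneg_right hest hs_nonneg
  have habs := abs_le.mp hkey
  constructor
  · linarith [habs.1]
  · have hfinal : α * s ≤ α * Real.sqrt (dotProduct a (V⁻¹.mulVec a)) := by
      rw [hdot]
      exact mul_le_mul_of_nonneg_left hs_le_norm hα
    nlinarith [habs.2, hfinal]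
end
end

section
/- Let d ≥ 1, λ > 0, T ≥ 4, and let a_1, …, a_T ∈ ℝ^d satisfy ‖a_t‖² ≤ λ for all t. Define V_t = λ I + Σ_{s=1}^{t−1} a_s a_sᵀ. Then Σ_{t=1}^{T} a_tᵀ V_t^{−1} a_t ≤ 5 d log T. -/
open scoped BigOperators
open Matrix

lemma half_le_log_one_add {x : ℝ} (h0 : 0 ≤ x) (h1 : x ≤ 1) :
    x ≤ 2 * Real.log (1 + x) := by
  have hE : Real.exp (x / 2) * Real.exp (-(x / 2)) = 1 := by
    rw [← Real.exp_add]; ring_nf; exact Real.exp_zero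
  have hA : -(x / 2) + 1 ≤ Real.exp (-(x / 2)) := Real.add_one_le_exp _
  have hexp : Real.exp (x / 2) ≤ 1 + x := by
    nlinarith [Real.exp_pos (x / 2), Real.exp_pos (-(x / 2))]
  have := (Real.le_log_iff_exp_le (by linarith : (0:ℝ) < 1 + x)).2 hexp
  linarith

lemma quad_vecMulVec {d : ℕ} (u x : Fin d → ℝ) :
    x ⬝ᵥ (Matrix.vecMulVec u u *ᵥ x) = (u ⬝ᵥ x) ^ 2 := by
  have h : Matrix.vecMulVec u u *ᵥ x = (u ⬝ᵥ x) • u := by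
    ext i
    simp [Matrix.vecMulVec, Matrix.mulVec, dotProduct, Finset.mul_sum,
      mul_assoc, mul_comm, mul_left_comm]
  rw [h, dotProduct_smul, dotProduct_comm]
  simp [sq, smul_eq_mul]

lemma dot_sum_mulVec {d : ℕ} (S : Finset ℕ) (M : ℕ → Matrix (Fin d) (Fin d) ℝ)
    (x : Fin d → ℝ) :
    x ⬝ᵥ ((∑ s ∈ S, M s) *ᵥ x) = ∑ s ∈ S, x ⬝ᵥ (M s *ᵥ x) := by
  induction S using Finset.cons_induction with
  | empty => simp [Matrix.mulVec]
  | cons a s ha ih =>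
    rw [Finset.sum_cons, Finset.sum_cons, Matrix.add_mulVec,
      dotProduct_add, ih]

lemma row_mul_mul_col {d : ℕ} (v u : Fin d → ℝ) (B : Matrix (Fin d) (Fin d) ℝ) :
    (Matrix.replicateRow Unit v * B * Matrix.replicateCol Unit u) () () = v ⬝ᵥ (B *ᵥ u) := by
  simp [Matrix.mul_apply, Matrix.replicateRow_apply, Matrix.replicateCol_apply, Matrix.mulVec,
    dotProduct, Finset.sum_mul, Finset.mul_sum]
  rw [Finset.sum_comm]
  simp [mul_assoc]

/-- Harmonic-sum bound: if `‖a_t‖² ≤ λ` and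
`V_t = λ I + ∑_{s=1}^{t-1} a_s a_sᵀ`, then `∑_{t=1}^T a_tᵀ V_t⁻¹ a_t ≤ 5 d log T`. -/
theorem harmonic_sum_bound (d T : ℕ) (hd : 1 ≤ d) (hT : 4 ≤ T)
    (lam : ℝ) (hlam : 0 < lam)
    (a : ℕ → Fin d → ℝ)
    (ha : ∀ t ∈ Finset.Icc 1 T, ∑ i, (a t i) ^ 2 ≤ lam)
    (V : ℕ → Matrix (Fin d) (Fin d) ℝ)
    (hV : ∀ t, V t = lam • (1 : Matrix (Fin d) (Fin d) ℝ) +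
      ∑ s ∈ Finset.Ico 1 t, Matrix.vecMulVec (a s) (a s)) :
    ∑ t ∈ Finset.Icc 1 T, dotProduct (a t) ((V t)⁻¹.mulVec (a t)) ≤
      5 * d * Real.log T := by
  -- quadratic form formula
  have hQ : ∀ t (x : Fin d → ℝ),
      x ⬝ᵥ ((V t) *ᵥ x) = lam * (x ⬝ᵥ x) + ∑ s ∈ Finset.Ico 1 t, (a s ⬝ᵥ x) ^ 2 := by
    intro t x
    rw [hV t, Matrix.add_mulVec, dotProduct_add, dot_sum_mulVec]
    congr 1
    · rw [Matrix.smul_mulVec, Matrix.one_mulVec, dotProduct_smul,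
        smul_eq_mul]
    · exact Finset.sum_congr rfl fun s _ => quad_vecMulVec _ _
  -- dot self nonneg and as sum of squares
  have hdotsq : ∀ (x : Fin d → ℝ), x ⬝ᵥ x = ∑ i, (x i) ^ 2 := by
    intro x; simp [dotProduct, sq]
  have hdotnn : ∀ (x : Fin d → ℝ), 0 ≤ x ⬝ᵥ x := by
    intro x; rw [hdotsq]; positivity
  -- lower bound on quadratic form
  have hQlow : ∀ t (x : Fin d → ℝ), lam * (x ⬝ᵥ x) ≤ x ⬝ᵥ ((V t) *ᵥ x) := by
    intro t x
    rw [hQ]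
    have : (0:ℝ) ≤ ∑ s ∈ Finset.Ico 1 t, (a s ⬝ᵥ x) ^ 2 :=
      Finset.sum_nonneg fun s _ => sq_nonneg _
    linarith
  -- positive definiteness
  have hsym : ∀ t, (V t)ᵀ = V t := by
    intro t
    ext i j
    rw [hV]
    simp only [Matrix.transpose_apply, Matrix.add_apply, Matrix.smul_apply,
      Matrix.one_apply, Matrix.sum_apply, Matrix.vecMulVec_apply, smul_eq_mul]
    congr 1
    · simp [eq_comm]
    · exact Finset.sum_congr rfl fun s _ => mul_comm _ _
  have hherm : ∀ t, (V t).IsHermitian := by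
    intro t
    have h1 : (V t)ᴴ = (V t)ᵀ := by ext i j; simp [Matrix.conjTranspose_apply]
    exact h1.trans (hsym t)
  have hpd : ∀ t, (V t).PosDef := by
    intro t
    refine Matrix.PosDef.of_dotProduct_mulVec_pos (hherm t) fun x hx => ?_
    have hxx : 0 < x ⬝ᵥ x :=
      lt_of_le_of_ne (hdotnn x)
        (fun h => hx (dotProduct_self_eq_zero.1 h.symm))
    have := hQlow t x
    have hst : star x = x := by simp
    rw [hst]
    nlinarith
  have hdet_pos : ∀ t, 0 < (V t).det := fun t => (hpd t).det_pos
  have hunit : ∀ t, IsUnit (V t).det := fun t => (hdet_pos t).ne'.isUnit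
  -- the harmonic terms
  set x : ℕ → ℝ := fun t => a t ⬝ᵥ ((V t)⁻¹ *ᵥ a t) with hxdef
  have hVinv : ∀ t, (V t) *ᵥ ((V t)⁻¹ *ᵥ (a t)) = a t := by
    intro t
    rw [Matrix.mulVec_mulVec, Matrix.mul_nonsing_inv _ (hunit t), Matrix.one_mulVec]
  have hxbound : ∀ t ∈ Finset.Icc 1 T, 0 ≤ x t ∧ x t ≤ 1 := by
    intro t ht
    set b := (V t)⁻¹ *ᵥ a t with hb
    have hVb : (V t) *ᵥ b = a t := hVinv t
    have hxb : x t = a t ⬝ᵥ b := rfl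
    have h1 : b ⬝ᵥ ((V t) *ᵥ b) = x t := by
      rw [hVb, dotProduct_comm]
    have h2 : lam * (b ⬝ᵥ b) ≤ x t := by rw [← h1]; exact hQlow t b
    have h0 : 0 ≤ x t := le_trans (mul_nonneg hlam.le (hdotnn b)) h2
    refine ⟨h0, ?_⟩
    have hCS : (x t) ^ 2 ≤ (a t ⬝ᵥ a t) * (b ⬝ᵥ b) := by
      rw [hxb]
      calc (a t ⬝ᵥ b) ^ 2 = (∑ i, a t i * b i) ^ 2 := rfl
        _ ≤ (∑ i, (a t i) ^ 2) * (∑ i, (b i) ^ 2) :=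
            Finset.sum_mul_sq_le_sq_mul_sq _ _ _
        _ = (a t ⬝ᵥ a t) * (b ⬝ᵥ b) := by rw [hdotsq, hdotsq]
    have haa : a t ⬝ᵥ a t ≤ lam := by rw [hdotsq]; exact ha t ht
    have hxx2 : x t ^ 2 ≤ x t :=
      le_trans hCS (le_trans (mul_le_mul_of_nonneg_right haa (hdotnn b)) h2)
    nlinarith
  -- determinant recursion
  have hstep : ∀ t, 1 ≤ t → (V (t + 1)).det = (V t).det * (1 + x t) := by
    intro t ht1
    have hsplit : V (t + 1) = V t + Matrix.vecMulVec (a t) (a t) := by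
      rw [hV, hV, Finset.sum_Ico_succ_top ht1, ← add_assoc]
    rw [hsplit, Matrix.vecMulVec_eq (ι := Unit), Matrix.det_add_replicateCol_mul_replicateRow (hunit t)]
    congr 1
    rw [Matrix.det_unique]
    have hr := row_mul_mul_col (a t) (a t) (V t)⁻¹
    simp only [Matrix.add_apply, Matrix.one_apply_eq]
    rw [hr]
  -- telescoping
  have hVdet1 : (V 1).det = lam ^ d := by
    rw [hV]
    simp [Matrix.det_smul, Fintype.card_fin]
  have htel : ∀ n : ℕ, (V (n + 1)).det = lam ^ d * ∏ t ∈ Finset.Icc 1 n, (1 + x t) := by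
    intro n
    induction n with
    | zero => simpa using hVdet1
    | succ n ih =>
      rw [hstep (n + 1) (by omega), ih,
        Finset.prod_Icc_succ_top (by omega : 1 ≤ n + 1)]
      ring
  -- upper bound on quadratic form of V (T+1)
  have hQup : ∀ y : Fin d → ℝ,
      y ⬝ᵥ ((V (T + 1)) *ᵥ y) ≤ lam * (T + 1) * (y ⬝ᵥ y) := by
    intro y
    rw [hQ]
    have hbnd : ∀ s ∈ Finset.Ico 1 (T + 1), (a s ⬝ᵥ y) ^ 2 ≤ lam * (y ⬝ᵥ y) := by
      intro s hs
      have hs' : s ∈ Finset.Icc 1 T := by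
        simp only [Finset.mem_Ico] at hs
        simp only [Finset.mem_Icc]
        omega
      calc (a s ⬝ᵥ y) ^ 2 = (∑ i, a s i * y i) ^ 2 := rfl
        _ ≤ (∑ i, (a s i) ^ 2) * (∑ i, (y i) ^ 2) :=
            Finset.sum_mul_sq_le_sq_mul_sq _ _ _
        _ ≤ lam * (y ⬝ᵥ y) := by
            rw [hdotsq y]
            exact mul_le_mul_of_nonneg_right (ha s hs')
              (Finset.sum_nonneg fun i _ => sq_nonneg _)
    have hsum : ∑ s ∈ Finset.Ico 1 (T + 1), (a s ⬝ᵥ y) ^ 2 ≤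
        (T : ℝ) * (lam * (y ⬝ᵥ y)) := by
      calc ∑ s ∈ Finset.Ico 1 (T + 1), (a s ⬝ᵥ y) ^ 2
          ≤ ∑ _s ∈ Finset.Ico 1 (T + 1), lam * (y ⬝ᵥ y) := Finset.sum_le_sum hbnd
        _ = (T : ℝ) * (lam * (y ⬝ᵥ y)) := by
            rw [Finset.sum_const]
            simp [nsmul_eq_mul]
    have := hsum
    nlinarith [hdotnn y, mul_nonneg hlam.le (hdotnn y)]
  -- eigenvalue bound on the determinant
  have hHerm := hherm (T + 1)
  have hdetle : (V (T + 1)).det ≤ (lam * (T + 1)) ^ d := by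
    rw [hHerm.det_eq_prod_eigenvalues]
    have hnn : ∀ i, 0 ≤ hHerm.eigenvalues i :=
      fun i => ((hpd (T + 1)).eigenvalues_pos i).le
    have hle : ∀ i, hHerm.eigenvalues i ≤ lam * (T + 1) := by
      intro i
      have hev := hHerm.eigenvalues_eq i
      set w := hHerm.eigenvectorBasis i with hw
      set v : Fin d → ℝ := ⇑w with hv
      have hnorm : ‖w‖ = 1 := hHerm.eigenvectorBasis.orthonormal.1 i
      have hvv : v ⬝ᵥ v = 1 := by
        have h1 : (inner ℝ w w : ℝ) = ‖w‖ ^ 2 := real_inner_self_eq_norm_sq _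
        have h2 : (inner ℝ w w : ℝ) = v ⬝ᵥ v := by
          rw [EuclideanSpace.inner_eq_star_dotProduct]
          simp only [dotProduct, star_trivial]
          rfl
        rw [hnorm, h2] at h1
        simpa using h1
      have hev' : hHerm.eigenvalues i = v ⬝ᵥ ((V (T + 1)) *ᵥ v) := by
        simpa using hev
      rw [hev']
      calc v ⬝ᵥ ((V (T + 1)) *ᵥ v) ≤ lam * (T + 1) * (v ⬝ᵥ v) := hQup v
        _ = lam * (T + 1) := by rw [hvv, mul_one]
    calc ∏ i, (hHerm.eigenvalues i : ℝ)
        ≤ ∏ _i : Fin d, (lam * (T + 1)) :=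
          Finset.prod_le_prod (fun i _ => hnn i) (fun i _ => hle i)
      _ = (lam * (T + 1)) ^ d := by
          rw [Finset.prod_const]
          simp
  -- product bound
  have hprodle : ∏ t ∈ Finset.Icc 1 T, (1 + x t) ≤ ((T : ℝ) + 1) ^ d := by
    have h1 : lam ^ d * ∏ t ∈ Finset.Icc 1 T, (1 + x t) ≤
        lam ^ d * ((T : ℝ) + 1) ^ d := by
      rw [← htel T]
      calc (V (T + 1)).det ≤ (lam * (T + 1)) ^ d := hdetle
        _ = lam ^ d * ((T : ℝ) + 1) ^ d := by
            rw [mul_pow]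
    have hlp : (0 : ℝ) < lam ^ d := pow_pos hlam d
    exact le_of_mul_le_mul_left h1 hlp
  -- positivity of log T
  have hT1 : (1 : ℝ) < (T : ℝ) := by
    have : (4 : ℝ) ≤ (T : ℝ) := by exact_mod_cast hT
    linarith
  have hlogT : 0 < Real.log T := Real.log_pos hT1
  -- log of the product
  have hone : ∀ t ∈ Finset.Icc 1 T, (0 : ℝ) < 1 + x t := by
    intro t ht
    have := (hxbound t ht).1
    linarith
  have hprodpos : (0 : ℝ) < ∏ t ∈ Finset.Icc 1 T, (1 + x t) :=
    Finset.prod_pos hone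
  have hlogprod : Real.log (∏ t ∈ Finset.Icc 1 T, (1 + x t)) =
      ∑ t ∈ Finset.Icc 1 T, Real.log (1 + x t) :=
    Real.log_prod (fun t ht => (hone t ht).ne')
  have hsum_le : ∑ t ∈ Finset.Icc 1 T, x t ≤
      2 * ∑ t ∈ Finset.Icc 1 T, Real.log (1 + x t) := by
    rw [Finset.mul_sum]
    refine Finset.sum_le_sum fun t ht => ?_
    exact half_le_log_one_add (hxbound t ht).1 (hxbound t ht).2
  have hlog_le : Real.log (∏ t ∈ Finset.Icc 1 T, (1 + x t)) ≤
      (d : ℝ) * Real.log ((T : ℝ) + 1) := by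
    calc Real.log (∏ t ∈ Finset.Icc 1 T, (1 + x t))
        ≤ Real.log (((T : ℝ) + 1) ^ d) := Real.log_le_log hprodpos hprodle
      _ = (d : ℝ) * Real.log ((T : ℝ) + 1) := by
          rw [Real.log_pow]
  have hlogT1 : Real.log ((T : ℝ) + 1) ≤ 2 * Real.log T := by
    have h4 : (4 : ℝ) ≤ (T : ℝ) := by exact_mod_cast hT
    have h2 : ((T : ℝ) + 1) ≤ (T : ℝ) ^ 2 := by nlinarith
    calc Real.log ((T : ℝ) + 1) ≤ Real.log ((T : ℝ) ^ 2) :=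
          Real.log_le_log (by linarith) h2
      _ = 2 * Real.log T := by
          rw [Real.log_pow]
          push_cast
          ring
  have hd1 : (1 : ℝ) ≤ (d : ℝ) := by exact_mod_cast hd
  calc ∑ t ∈ Finset.Icc 1 T, dotProduct (a t) ((V t)⁻¹.mulVec (a t))
      = ∑ t ∈ Finset.Icc 1 T, x t := rfl
    _ ≤ 2 * ∑ t ∈ Finset.Icc 1 T, Real.log (1 + x t) := hsum_le
    _ = 2 * Real.log (∏ t ∈ Finset.Icc 1 T, (1 + x t)) := by rw [hlogprod]
    _ ≤ 2 * ((d : ℝ) * Real.log ((T : ℝ) + 1)) := by linarith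
    _ ≤ 2 * ((d : ℝ) * (2 * Real.log T)) := by
        have := mul_le_mul_of_nonneg_left hlogT1 (le_trans zero_le_one hd1)
        linarith
    _ ≤ 5 * d * Real.log T := by nlinarith
end

section
/- Let d ≥ 1, λ > 0, T ≥ 3, and let a_1, …, a_{T−1} ∈ ℝ^d satisfy ‖a_t‖² ≤ λ for all t. Define V_t = λ I + Σ_{s=1}^{t−1} a_s a_sᵀ. If 1 = τ_1 < τ_2 < ⋯ < τ_N ≤ T are indices such that det(V_{τ_{i+1}}) > 2 det(V_{τ_i}) for every 1 ≤ i ≤ N−1, then N ≤ 2 d log T. -/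
open scoped BigOperators

private lemma aux_sum_mulVec {d : ℕ} (s : Finset ℕ) (A : ℕ → Matrix (Fin d) (Fin d) ℝ)
    (v : Fin d → ℝ) : Matrix.mulVec (∑ x ∈ s, A x) v = ∑ x ∈ s, Matrix.mulVec (A x) v := by
  ext i
  rw [Finset.sum_apply]
  simp only [Matrix.mulVec, dotProduct, Matrix.sum_apply, Finset.sum_mul]
  rw [Finset.sum_comm]

private lemma aux_quad {d : ℕ} (lam : ℝ) (t : ℕ) (a : ℕ → Fin d → ℝ) (v : Fin d → ℝ) :
    dotProduct v (Matrix.mulVec (lam • (1 : Matrix (Fin d) (Fin d) ℝ) +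
        ∑ s ∈ Finset.Ico 1 t, Matrix.vecMulVec (a s) (a s)) v)
      = lam * (∑ i, (v i)^2) + ∑ s ∈ Finset.Ico 1 t, (∑ i, a s i * v i)^2 := by
  rw [Matrix.add_mulVec, dotProduct_add, aux_sum_mulVec]
  have hds : dotProduct v (∑ x ∈ Finset.Ico 1 t, Matrix.mulVec (Matrix.vecMulVec (a x) (a x)) v)
      = ∑ x ∈ Finset.Ico 1 t, dotProduct v (Matrix.mulVec (Matrix.vecMulVec (a x) (a x)) v) := by
    simp only [dotProduct, Finset.sum_apply, Finset.mul_sum]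
    rw [Finset.sum_comm]
  rw [hds]
  congr 1
  · simp [Matrix.smul_mulVec, Matrix.one_mulVec, dotProduct, Finset.mul_sum, sq,
      mul_comm, mul_left_comm]
  · apply Finset.sum_congr rfl; intro s _
    simp only [Matrix.mulVec, dotProduct, Matrix.vecMulVec_apply, sq]
    rw [Finset.sum_mul_sum]
    apply Finset.sum_congr rfl; intro i _
    rw [Finset.mul_sum]
    apply Finset.sum_congr rfl; intro j _
    ring

private lemma aux_det_le {d T : ℕ} (hT : 3 ≤ T) {lam : ℝ} (hlam : 0 < lam)
    {a : ℕ → Fin d → ℝ} (ha : ∀ t ∈ Finset.Icc 1 (T-1), ∑ i, (a t i)^2 ≤ lam)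
    (t : ℕ) (ht : t ≤ T) :
    (lam • (1 : Matrix (Fin d) (Fin d) ℝ) +
      ∑ s ∈ Finset.Ico 1 t, Matrix.vecMulVec (a s) (a s)).det ≤ (lam * T)^d := by
  set M : Matrix (Fin d) (Fin d) ℝ := lam • (1 : Matrix (Fin d) (Fin d) ℝ) +
      ∑ s ∈ Finset.Ico 1 t, Matrix.vecMulVec (a s) (a s) with hM
  have hherm : M.IsHermitian := by
    refine Matrix.ext fun i j => ?_
    simp [hM, Matrix.conjTranspose_apply, Matrix.add_apply, Matrix.smul_apply, Matrix.one_apply,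
      Matrix.sum_apply, Matrix.vecMulVec_apply, eq_comm, mul_comm]
  have hpsd : M.PosSemidef := by
    refine Matrix.PosSemidef.of_dotProduct_mulVec_nonneg hherm (fun x => ?_)
    have hsx : star x = x := rfl
    rw [hsx, hM, aux_quad]
    have h1 : 0 ≤ lam * ∑ i, (x i)^2 := by positivity
    have h2 : 0 ≤ ∑ s ∈ Finset.Ico 1 t, (∑ i, a s i * x i)^2 :=
      Finset.sum_nonneg fun s _ => sq_nonneg _
    linarith
  have heig : ∀ i, hherm.eigenvalues i ≤ lam * T := by
    intro i
    have heq : hherm.eigenvalues i =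
        dotProduct (⇑(hherm.eigenvectorBasis i)) (Matrix.mulVec M ⇑(hherm.eigenvectorBasis i)) := by
      simpa using hherm.eigenvalues_eq i
    set v : Fin d → ℝ := ⇑(hherm.eigenvectorBasis i) with hv
    have hnorm : ‖hherm.eigenvectorBasis i‖ = 1 := hherm.eigenvectorBasis.orthonormal.1 i
    have hsum1 : ∑ j, (v j)^2 = 1 := by
      have h2 := real_inner_self_eq_norm_sq (hherm.eigenvectorBasis i)
      rw [hnorm] at h2
      simp only [PiLp.inner_apply, RCLike.inner_apply, conj_trivial, one_pow] at h2
      simpa [sq] using h2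
    rw [heq, hM, aux_quad, hsum1, mul_one]
    have hbound : ∑ s ∈ Finset.Ico 1 t, (∑ j, a s j * v j)^2 ≤ ((Finset.Ico 1 t).card : ℝ) * lam := by
      have hterm : ∀ s ∈ Finset.Ico 1 t, (∑ j, a s j * v j)^2 ≤ lam := by
        intro s hs
        obtain ⟨hs1, hs2⟩ := Finset.mem_Ico.mp hs
        have hsT : s ∈ Finset.Icc 1 (T-1) := Finset.mem_Icc.mpr ⟨hs1, by omega⟩
        calc (∑ j, a s j * v j)^2 ≤ (∑ j, (a s j)^2) * ∑ j, (v j)^2 :=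
              Finset.sum_mul_sq_le_sq_mul_sq Finset.univ (a s) v
          _ = ∑ j, (a s j)^2 := by rw [hsum1, mul_one]
          _ ≤ lam := ha s hsT
      simpa [nsmul_eq_mul] using Finset.sum_le_card_nsmul (Finset.Ico 1 t) _ lam hterm
    have hcard : ((Finset.Ico 1 t).card : ℝ) ≤ (T:ℝ) - 1 := by
      rw [Nat.card_Ico]
      have h1 : ((t-1:ℕ):ℝ) ≤ ((T-1:ℕ):ℝ) := by exact_mod_cast Nat.sub_le_sub_right ht 1
      have h2 : ((T-1:ℕ):ℝ) = (T:ℝ) - 1 := by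
        rw [Nat.cast_sub (by omega)]; norm_num
      linarith
    have hc : ((Finset.Ico 1 t).card : ℝ) * lam ≤ ((T:ℝ) - 1) * lam := by nlinarith
    have hT1 : (1:ℝ) ≤ (T:ℝ) := by exact_mod_cast (by omega : 1 ≤ T)
    nlinarith
  have heig0 : ∀ i, 0 ≤ hherm.eigenvalues i := fun i => hpsd.eigenvalues_nonneg i
  have hdet : M.det = ∏ i, hherm.eigenvalues i := by
    simpa using hherm.det_eq_prod_eigenvalues
  calc M.det = ∏ i, hherm.eigenvalues i := hdet
    _ ≤ ∏ _i : Fin d, (lam * T) :=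
        Finset.prod_le_prod (fun i _ => heig0 i) (fun i _ => heig i)
    _ = (lam * T)^d := by simp [Finset.prod_const]

/-- Bound on the number of determinant-doubling epochs: if
`V_t = λ I + ∑_{s=1}^{t-1} a_s a_sᵀ` with `‖a_t‖² ≤ λ`, and
`1 = τ_1 < τ_2 < ⋯ < τ_N ≤ T` satisfy `det(V_{τ_{i+1}}) > 2 det(V_{τ_i})`,
then `N ≤ 2 d log T`. -/
theorem num_epochs_bound (d T N : ℕ) (hd : 1 ≤ d) (hT : 3 ≤ T)
    (lam : ℝ) (hlam : 0 < lam)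
    (a : ℕ → Fin d → ℝ)
    (ha : ∀ t ∈ Finset.Icc 1 (T - 1), ∑ i, (a t i) ^ 2 ≤ lam)
    (V : ℕ → Matrix (Fin d) (Fin d) ℝ)
    (hV : ∀ t, V t = lam • (1 : Matrix (Fin d) (Fin d) ℝ) +
      ∑ s ∈ Finset.Ico 1 t, Matrix.vecMulVec (a s) (a s))
    (τ : ℕ → ℕ) (hτ1 : τ 1 = 1)
    (hτmono : ∀ i ∈ Finset.Ico 1 N, τ i < τ (i + 1))
    (hτT : ∀ i ∈ Finset.Icc 1 N, τ i ≤ T)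
    (hdet : ∀ i ∈ Finset.Icc 1 (N - 1), 2 * (V (τ i)).det < (V (τ (i + 1))).det) :
    (N : ℝ) ≤ 2 * d * Real.log T := by
  have hd1 : (1:ℝ) ≤ (d:ℝ) := by exact_mod_cast hd
  have hT3 : (3:ℝ) ≤ (T:ℝ) := by exact_mod_cast hT
  have hlog3 : 1 < Real.log T := by
    rw [Real.lt_log_iff_exp_lt (by linarith)]
    calc Real.exp 1 < 2.7182818286 := Real.exp_one_lt_d9
      _ < 3 := by norm_num
      _ ≤ (T:ℝ) := hT3
  have hdlog : (1:ℝ) ≤ (d:ℝ) * Real.log T := by nlinarith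
  rcases Nat.lt_or_ge N 2 with hN2 | hN2
  · have : (N:ℝ) ≤ 1 := by exact_mod_cast Nat.lt_succ_iff.mp hN2
    linarith
  -- N ≥ 2
  have hlow : ∀ i, 1 ≤ i → i ≤ N → (2:ℝ)^(i-1) * lam^d ≤ (V (τ i)).det := by
    intro i hi
    induction i, hi using Nat.le_induction with
    | base =>
      intro _
      rw [hτ1, hV 1]
      simp [Finset.Ico_self, Matrix.det_smul]
    | succ i hi ih =>
      intro hiN
      have hdet' := hdet i (Finset.mem_Icc.mpr ⟨hi, by omega⟩)
      have ih' := ih (by omega)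
      have hpow : (2:ℝ)^((i+1)-1) = 2 * (2:ℝ)^(i-1) := by
        rw [Nat.add_sub_cancel, ← pow_succ']
        congr 1
        omega
      rw [hpow, mul_assoc]
      linarith
  have hup : (V (τ N)).det ≤ (lam * T)^d := by
    rw [hV]
    exact aux_det_le hT hlam ha _ (hτT N (Finset.mem_Icc.mpr ⟨by omega, le_refl N⟩))
  have hstrict : (2:ℝ)^(N-1) * lam^d < (V (τ N)).det := by
    have hdet' := hdet (N-1) (Finset.mem_Icc.mpr ⟨by omega, le_refl _⟩)
    have hN1 : (N-1) + 1 = N := by omega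
    rw [hN1] at hdet'
    have ihN := hlow (N-1) (by omega) (by omega)
    have hpow : (2:ℝ)^(N-1) = 2 * (2:ℝ)^(N-1-1) := by
      rw [← pow_succ']
      congr 1
      omega
    rw [hpow, mul_assoc]
    linarith
  have hfin : (2:ℝ)^(N-1) < (T:ℝ)^d := by
    have hld : (0:ℝ) < lam^d := by positivity
    have h1 : (2:ℝ)^(N-1) * lam^d < (lam*T)^d := lt_of_lt_of_le hstrict hup
    rw [mul_pow] at h1
    have h1' : (2:ℝ)^(N-1) * lam^d < (T:ℝ)^d * lam^d := by linarith [h1]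
    exact lt_of_mul_lt_mul_right h1' (le_of_lt hld)
  have hnat : 2^(N-1) < T^d := by exact_mod_cast hfin
  rcases Nat.lt_or_ge N 3 with h3 | h3
  · have : (N:ℝ) ≤ 2 := by exact_mod_cast Nat.lt_succ_iff.mp h3
    linarith
  rcases Nat.lt_or_ge N 4 with h4 | h4
  · -- N = 3
    have hN3 : N = 3 := by omega
    subst hN3
    have h5 : 5 ≤ T^d := by norm_num at hnat; omega
    have e3 : Real.exp 3 < 25 := by
      have h := Real.exp_one_lt_d9
      have h0 := Real.exp_pos 1
      calc Real.exp 3 = (Real.exp 1)^3 := by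
            rw [← Real.exp_nat_mul]; norm_num
        _ < 2.7182818286^3 := by
            apply pow_lt_pow_left₀ h (le_of_lt h0)
            norm_num
        _ < 25 := by norm_num
    have e32 : Real.exp (3/2) < 5 := by
      have hm : Real.exp (3/2) * Real.exp (3/2) = Real.exp 3 := by
        rw [← Real.exp_add]; norm_num
      nlinarith [Real.exp_pos (3/2:ℝ)]
    have hlog5 : (3/2:ℝ) < Real.log 5 := (Real.lt_log_iff_exp_lt (by norm_num)).2 e32
    have h5' : (5:ℝ) ≤ (T:ℝ)^d := by exact_mod_cast h5
    have hlogTd : Real.log 5 ≤ (d:ℝ) * Real.log T := by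
      rw [← Real.log_pow]
      exact Real.log_le_log (by norm_num) h5'
    norm_num
    linarith
  · -- N ≥ 4
    have hN4 : (4:ℝ) ≤ (N:ℝ) := by exact_mod_cast h4
    have hlog2 : (0.6931471803:ℝ) < Real.log 2 := Real.log_two_gt_d9
    have hlt : ((N:ℝ)-1) * Real.log 2 < (d:ℝ) * Real.log T := by
      have h1 := Real.log_lt_log (by positivity) hfin
      rw [Real.log_pow, Real.log_pow] at h1
      have h2 : ((N-1:ℕ):ℝ) = (N:ℝ) - 1 := by
        rw [Nat.cast_sub (by omega)]; norm_num
      rw [h2] at h1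
      exact h1
    nlinarith [mul_nonneg (by linarith : (0:ℝ) ≤ (N:ℝ)-4) (by linarith : (0:ℝ) ≤ 2*Real.log 2 - 1)]
end

section
/- Let d ≥ 1, λ > 0, T ≥ 4, and let a_1, …, a_T ∈ ℝ^d satisfy ‖a_t‖² ≤ λ for all t. Define V_t = λ I + Σ_{s=1}^{t−1} a_s a_sᵀ. Suppose τ : {1,…,T} → {1,…,T} satisfies τ(t) ≤ t and det(V_t) ≤ 2 det(V_{τ(t)}) for every t. Then Σ_{t=1}^{T} √(a_tᵀ V_{τ(t)}^{−1} a_t) ≤ √(10 T d log T). -/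
open scoped BigOperators
open Matrix
open scoped RealInnerProductSpace

section EpochAux
variable {d : ℕ}

lemma core_inv_bound {d : ℕ} {M : Matrix (Fin d) (Fin d) ℝ} (hM : M.PosDef)
    (hM1 : (1 - M).PosSemidef) (z : Fin d → ℝ) :
    z ⬝ᵥ M⁻¹ *ᵥ z ≤ (M.det)⁻¹ * (z ⬝ᵥ z) := by
  have h := hM.isHermitian
  set μ := h.eigenvalues with hμdef
  set U : Matrix (Fin d) (Fin d) ℝ := (h.eigenvectorUnitary : Matrix (Fin d) (Fin d) ℝ) with hUdef
  have hUU : U * star U = 1 := (Matrix.mem_unitaryGroup_iff).mp h.eigenvectorUnitary.2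
  have hUU' : star U * U = 1 := (Matrix.mem_unitaryGroup_iff').mp h.eigenvectorUnitary.2
  have hμpos : ∀ i, 0 < μ i := fun i => hM.eigenvalues_pos i
  have hμ1 : ∀ i, μ i ≤ 1 := by
    intro i
    have hv := h.mulVec_eigenvectorBasis i
    have hnorm : (⇑(h.eigenvectorBasis i) : Fin d → ℝ) ⬝ᵥ ⇑(h.eigenvectorBasis i) = 1 := by
      have h2 : (inner ℝ (h.eigenvectorBasis i) (h.eigenvectorBasis i) : ℝ) = 1 := by
        rw [real_inner_self_eq_norm_sq]
        simp [h.eigenvectorBasis.orthonormal.1 i]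
      rw [EuclideanSpace.inner_eq_star_dotProduct] at h2; simpa using h2
    have h0 := hM1.dotProduct_mulVec_nonneg (⇑(h.eigenvectorBasis i))
    rw [sub_mulVec, one_mulVec, hv] at h0
    simp only [star_trivial, dotProduct_sub, dotProduct_smul, smul_eq_mul, hnorm] at h0
    linarith
  have hspec : M = U * Matrix.diagonal μ * star U := by
    simpa using h.spectral_theorem
  have hDD : Matrix.diagonal μ * Matrix.diagonal (fun i => (μ i)⁻¹) = 1 := by
    rw [diagonal_mul_diagonal]
    rw [show (fun i => μ i * (μ i)⁻¹) = fun _ => (1:ℝ) from funext fun i => mul_inv_cancel₀ (hμpos i).ne']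
    exact Matrix.diagonal_one
  have hMinv : M⁻¹ = U * Matrix.diagonal (fun i => (μ i)⁻¹) * star U := by
    apply Matrix.inv_eq_right_inv
    rw [hspec]
    simp only [← Matrix.mul_assoc]
    rw [Matrix.mul_assoc (U * Matrix.diagonal μ) (star U) U, hUU', Matrix.mul_one,
      Matrix.mul_assoc U (Matrix.diagonal μ) (Matrix.diagonal _), hDD, Matrix.mul_one, hUU]
  set w : Fin d → ℝ := z ᵥ* U with hwdef
  have hsUz : star U *ᵥ z = w := by
    rw [Matrix.star_eq_conjTranspose, conjTranspose_eq_transpose_of_trivial, mulVec_transpose]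
  have hquad : z ⬝ᵥ M⁻¹ *ᵥ z = ∑ i, (μ i)⁻¹ * w i ^ 2 := by
    rw [hMinv, ← Matrix.mulVec_mulVec, ← Matrix.mulVec_mulVec, hsUz, Matrix.dotProduct_mulVec z]
    simp only [dotProduct, Matrix.mulVec_diagonal, hwdef]
    exact Finset.sum_congr rfl fun i _ => by ring
  have hzz : z ⬝ᵥ z = ∑ i, w i ^ 2 := by
    have : z ⬝ᵥ z = z ⬝ᵥ (U * star U) *ᵥ z := by rw [hUU, Matrix.one_mulVec]
    rw [this, ← Matrix.mulVec_mulVec, hsUz, Matrix.dotProduct_mulVec z]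
    simp [dotProduct, pow_two, ← hwdef]
  have hdet : M.det = ∏ i, μ i := by
    simpa using h.det_eq_prod_eigenvalues
  have hprodpos : 0 < ∏ i, μ i := Finset.prod_pos fun i _ => hμpos i
  rw [hquad, hzz, hdet, Finset.mul_sum]
  apply Finset.sum_le_sum
  intro i _
  have hle : ∏ j, μ j ≤ μ i := by
    rw [← Finset.mul_prod_erase Finset.univ μ (Finset.mem_univ i)]
    nth_rewrite 2 [← mul_one (μ i)]
    apply mul_le_mul_of_nonneg_left _ (hμpos i).le
    exact Finset.prod_le_one (fun j _ => (hμpos j).le) (fun j _ => hμ1 j)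
  have : (μ i)⁻¹ ≤ (∏ j, μ j)⁻¹ := by
    apply inv_anti₀ hprodpos hle
  exact mul_le_mul_of_nonneg_right this (sq_nonneg _)
lemma key_comparison {d : ℕ} {A B : Matrix (Fin d) (Fin d) ℝ} (hA : A.PosDef) (hB : B.PosDef)
    (hAB : (B - A).PosSemidef) (x : Fin d → ℝ) :
    x ⬝ᵥ A⁻¹ *ᵥ x ≤ (B.det / A.det) * (x ⬝ᵥ B⁻¹ *ᵥ x) := by
  have hBi : (B⁻¹).PosDef := hB.inv
  set N := (open scoped MatrixOrder in CFC.sqrt (B⁻¹)) with hNdef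
  have hNps : N.PosSemidef := by
    open scoped MatrixOrder in exact Matrix.nonneg_iff_posSemidef.mp (CFC.sqrt_nonneg _)
  have hNN : N * N = B⁻¹ := by
    open scoped MatrixOrder in exact CFC.sqrt_mul_sqrt_self _ hBi.posSemidef.nonneg
  have hNherm : Nᴴ = N := hNps.isHermitian
  have hNt : Nᵀ = N := by rw [← conjTranspose_eq_transpose_of_trivial, hNherm]
  have hdetB : (0:ℝ) < B.det := hB.det_pos
  have hdetA : (0:ℝ) < A.det := hA.det_pos
  have hdetBi : (B⁻¹).det = (B.det)⁻¹ := by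
    rw [Matrix.det_nonsing_inv, Ring.inverse_eq_inv']
  have hdetNN : N.det * N.det = (B.det)⁻¹ := by
    rw [← Matrix.det_mul, hNN, hdetBi]
  have hNdetne : N.det ≠ 0 := by
    have hpos : (0:ℝ) < N.det * N.det := hdetNN ▸ inv_pos.mpr hdetB
    intro h0
    rw [h0, mul_zero] at hpos
    exact lt_irrefl _ hpos
  have hNunit : IsUnit N.det := hNdetne.isUnit
  have hNUnitM : IsUnit N := (Matrix.isUnit_iff_isUnit_det N).mpr hNunit
  have hvm : ∀ v : Fin d → ℝ, v ᵥ* N = N *ᵥ v := fun v => by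
    rw [← Matrix.mulVec_transpose, hNt]
  have hq : ∀ (C : Matrix (Fin d) (Fin d) ℝ) (v y : Fin d → ℝ),
      v ⬝ᵥ (N * C) *ᵥ y = (N *ᵥ v) ⬝ᵥ C *ᵥ y := by
    intro C v y
    rw [← Matrix.mulVec_mulVec, Matrix.dotProduct_mulVec v N, hvm]
  set M := N * A * N with hMdef
  have hMps : M.PosSemidef := by
    have := hA.posSemidef.conjTranspose_mul_mul_same N
    rwa [hNherm] at this
  have hMinj : Function.Injective N.mulVec := Matrix.mulVec_injective_iff_isUnit.mpr hNUnitM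
  have hM : M.PosDef := by
    refine Matrix.PosDef.of_dotProduct_mulVec_pos hMps.isHermitian fun x hx => ?_
    have hNx : N *ᵥ x ≠ 0 := by
      intro h0
      apply hx
      apply hMinj
      rw [h0, Matrix.mulVec_zero]
    have hpos := hA.dotProduct_mulVec_pos hNx
    rw [star_trivial] at hpos ⊢
    rw [hMdef, Matrix.mul_assoc, hq, ← Matrix.mulVec_mulVec]
    exact hpos
  have hNBN : N * B * N = 1 := by
    have hBeq : B = (N * N)⁻¹ := by
      rw [hNN, Matrix.nonsing_inv_nonsing_inv B hdetB.ne'.isUnit]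
    rw [hBeq, Matrix.mul_inv_rev, ← Matrix.mul_assoc N N⁻¹ N⁻¹,
      Matrix.mul_nonsing_inv N hNunit, Matrix.one_mul, Matrix.nonsing_inv_mul N hNunit]
  have h1M : (1 - M).PosSemidef := by
    have h2 := hAB.conjTranspose_mul_mul_same N
    rw [hNherm] at h2
    have : N * (B - A) * N = 1 - M := by
      rw [Matrix.mul_sub, Matrix.sub_mul, hNBN]
    rwa [this] at h2
  have hMdetval : M.det = (B.det)⁻¹ * A.det := by
    rw [hMdef, Matrix.det_mul, Matrix.det_mul]
    rw [show N.det * A.det * N.det = (N.det * N.det) * A.det by ring, hdetNN]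
  have hMinv : M⁻¹ = N⁻¹ * A⁻¹ * N⁻¹ := by
    rw [hMdef, Matrix.mul_inv_rev, Matrix.mul_inv_rev]
    rw [Matrix.mul_assoc]
  have hcore := core_inv_bound hM h1M (N *ᵥ x)
  have hL : (N *ᵥ x) ⬝ᵥ M⁻¹ *ᵥ (N *ᵥ x) = x ⬝ᵥ A⁻¹ *ᵥ x := by
    rw [Matrix.mulVec_mulVec, hMinv]
    rw [show N⁻¹ * A⁻¹ * N⁻¹ * N = N⁻¹ * A⁻¹ by
      rw [Matrix.mul_assoc, Matrix.nonsing_inv_mul N hNunit, Matrix.mul_one]]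
    rw [← hq (N⁻¹ * A⁻¹) x x, ← Matrix.mul_assoc, Matrix.mul_nonsing_inv N hNunit,
      Matrix.one_mul]
  have hR : (N *ᵥ x) ⬝ᵥ (N *ᵥ x) = x ⬝ᵥ B⁻¹ *ᵥ x := by
    rw [← hNN, ← hq N x x]
  rw [hL, hR, hMdetval] at hcore
  calc x ⬝ᵥ A⁻¹ *ᵥ x ≤ ((B.det)⁻¹ * A.det)⁻¹ * (x ⬝ᵥ B⁻¹ *ᵥ x) := hcore
    _ = (B.det / A.det) * (x ⬝ᵥ B⁻¹ *ᵥ x) := by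
        rw [mul_inv, inv_inv]; ring
lemma epoch_eig_ge {W : Matrix (Fin d) (Fin d) ℝ} (h : W.IsHermitian) {lam : ℝ}
    (hlow : (W - lam • 1).PosSemidef) (i : Fin d) : lam ≤ h.eigenvalues i := by
  have hv := h.mulVec_eigenvectorBasis i
  have hnorm : (⇑(h.eigenvectorBasis i) : Fin d → ℝ) ⬝ᵥ ⇑(h.eigenvectorBasis i) = 1 := by
    have h2 : (inner ℝ (h.eigenvectorBasis i) (h.eigenvectorBasis i) : ℝ) = 1 := by
      rw [real_inner_self_eq_norm_sq]
      simp [h.eigenvectorBasis.orthonormal.1 i]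
    rw [EuclideanSpace.inner_eq_star_dotProduct] at h2; simpa using h2
  have h0 := hlow.dotProduct_mulVec_nonneg (⇑(h.eigenvectorBasis i))
  rw [sub_mulVec, hv, Matrix.smul_mulVec, one_mulVec] at h0
  simp only [star_trivial, dotProduct_sub, dotProduct_smul, smul_eq_mul, hnorm] at h0
  linarith

lemma epoch_trace_eq_sum_eig {W : Matrix (Fin d) (Fin d) ℝ} (h : W.IsHermitian) :
    W.trace = ∑ i, h.eigenvalues i := by
  set U : Matrix (Fin d) (Fin d) ℝ := (h.eigenvectorUnitary : Matrix (Fin d) (Fin d) ℝ)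
  have hUU' : star U * U = 1 := (Matrix.mem_unitaryGroup_iff').mp h.eigenvectorUnitary.2
  have hspec : W = U * Matrix.diagonal h.eigenvalues * star U := by
    simpa using h.spectral_theorem
  conv_lhs => rw [hspec]
  rw [Matrix.trace_mul_cycle, hUU', Matrix.one_mul, Matrix.trace_diagonal]

lemma epoch_det_le {W : Matrix (Fin d) (Fin d) ℝ} (hW : W.PosDef) {lam c : ℝ}
    (hlam : 0 < lam) (hc : 0 ≤ c) (hlow : (W - lam • 1).PosSemidef)
    (htr : W.trace ≤ lam * d + c) : W.det ≤ (lam + c) ^ d := by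
  have h := hW.isHermitian
  have hge : ∀ i, lam ≤ h.eigenvalues i := epoch_eig_ge h hlow
  have hsum : ∑ i, h.eigenvalues i ≤ lam * d + c := by
    rw [← epoch_trace_eq_sum_eig h]; exact htr
  have hle : ∀ i, h.eigenvalues i ≤ lam + c := by
    intro i
    have h1 : ∑ j ∈ Finset.univ.erase i, h.eigenvalues j ≥ (d - 1) * lam := by
      have : ∑ j ∈ Finset.univ.erase i, h.eigenvalues j ≥
          ∑ _j ∈ Finset.univ.erase i, lam := Finset.sum_le_sum (fun j _ => hge j)
      have hcard : (Finset.univ.erase i).card = d - 1 := by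
        rw [Finset.card_erase_of_mem (Finset.mem_univ i)]
        simp
      rw [Finset.sum_const, hcard, nsmul_eq_mul] at this
      have hd1 : ((d - 1 : ℕ) : ℝ) = (d : ℝ) - 1 := by
        have h1d : 1 ≤ d := Fin.pos i
        rw [Nat.cast_sub h1d, Nat.cast_one]
      rw [hd1] at this
      exact this
    have h2 : h.eigenvalues i + ((d:ℝ) - 1) * lam ≤ lam * d + c := by
      calc h.eigenvalues i + ((d:ℝ) - 1) * lam
          ≤ h.eigenvalues i + ∑ j ∈ Finset.univ.erase i, h.eigenvalues j := by linarith [h1]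
        _ = ∑ j, h.eigenvalues j := by
            rw [← Finset.add_sum_erase Finset.univ h.eigenvalues (Finset.mem_univ i)]
        _ ≤ lam * d + c := hsum
    nlinarith [hlam]
  rw [h.det_eq_prod_eigenvalues]
  push_cast
  calc ∏ i, h.eigenvalues i ≤ ∏ _i : Fin d, (lam + c) :=
        Finset.prod_le_prod (fun i _ => le_trans hlam.le (hge i)) (fun i _ => hle i)
    _ = (lam + c) ^ d := by rw [Finset.prod_const, Finset.card_univ, Fintype.card_fin]

lemma epoch_vecMulVec_psd (u : Fin d → ℝ) : (Matrix.vecMulVec u u).PosSemidef := by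
  apply Matrix.PosSemidef.of_dotProduct_mulVec_nonneg
  · ext i j
    simp [Matrix.vecMulVec_apply, Matrix.conjTranspose_apply, mul_comm]
  · intro x
    rw [star_trivial]
    have hx : x ⬝ᵥ (Matrix.vecMulVec u u) *ᵥ x = (∑ i, x i * u i) ^ 2 := by
      simp only [dotProduct, Matrix.mulVec, Matrix.vecMulVec_apply, pow_two,
        Finset.mul_sum, Finset.sum_mul]
      rw [Finset.sum_comm]
      exact Finset.sum_congr rfl fun i _ => Finset.sum_congr rfl fun j _ => by ring
    rw [hx]
    positivity

lemma epoch_quad_inv_nonneg {W : Matrix (Fin d) (Fin d) ℝ} (hW : W.PosDef) (u : Fin d → ℝ) :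
    0 ≤ u ⬝ᵥ W⁻¹ *ᵥ u := by
  have := hW.inv.posSemidef.dotProduct_mulVec_nonneg u
  rwa [star_trivial] at this

lemma epoch_quad_inv_le_one {W : Matrix (Fin d) (Fin d) ℝ} (hW : W.PosDef) {lam : ℝ}
    (hlam : 0 < lam) (hlow : (W - lam • 1).PosSemidef) {u : Fin d → ℝ}
    (hu : u ⬝ᵥ u ≤ lam) : u ⬝ᵥ W⁻¹ *ᵥ u ≤ 1 := by
  set y := W⁻¹ *ᵥ u with hy
  have hWy : W *ᵥ y = u := by
    rw [hy, Matrix.mulVec_mulVec, Matrix.mul_nonsing_inv _ hW.det_pos.ne'.isUnit,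
      Matrix.one_mulVec]
  set w := u ⬝ᵥ y with hw
  have hyy : 0 ≤ y ⬝ᵥ y := by
    have : y ⬝ᵥ y = ∑ i, y i ^ 2 := by simp [dotProduct, pow_two]
    rw [this]; positivity
  have h1 : lam * (y ⬝ᵥ y) ≤ w := by
    have h0 := hlow.dotProduct_mulVec_nonneg y
    rw [star_trivial, sub_mulVec, Matrix.smul_mulVec, one_mulVec, dotProduct_sub,
      dotProduct_smul, hWy, smul_eq_mul] at h0
    have : y ⬝ᵥ u = w := by rw [hw, dotProduct_comm]
    linarith [this ▸ h0]
  have h2 : w ^ 2 ≤ lam * (y ⬝ᵥ y) := by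
    have hcs := Finset.sum_mul_sq_le_sq_mul_sq Finset.univ u y
    have e1 : ∑ i, u i * y i = w := rfl
    have e2 : ∑ i, u i ^ 2 = u ⬝ᵥ u := by simp [dotProduct, pow_two]
    have e3 : ∑ i, y i ^ 2 = y ⬝ᵥ y := by simp [dotProduct, pow_two]
    rw [e1, e2, e3] at hcs
    calc w ^ 2 ≤ (u ⬝ᵥ u) * (y ⬝ᵥ y) := hcs
      _ ≤ lam * (y ⬝ᵥ y) := mul_le_mul_of_nonneg_right hu hyy
  have hw0 : 0 ≤ w := epoch_quad_inv_nonneg hW u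
  nlinarith

lemma epoch_det_rank_one {W : Matrix (Fin d) (Fin d) ℝ} (hW : W.PosDef) (u : Fin d → ℝ) :
    (W + Matrix.vecMulVec u u).det = W.det * (1 + u ⬝ᵥ W⁻¹ *ᵥ u) := by
  rw [Matrix.vecMulVec_eq Unit, Matrix.det_add_replicateCol_mul_replicateRow hW.det_pos.ne'.isUnit]
  congr 1
  rw [Matrix.det_unique, Matrix.add_apply, Matrix.one_apply_eq, Matrix.mul_assoc,
    ← Matrix.replicateCol_mulVec, Matrix.replicateRow_mul_replicateCol_apply]

lemma epoch_log_bound {u : ℝ} (h0 : 0 ≤ u) (h1 : u ≤ 1) : u ≤ 2 * Real.log (1 + u) := by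
  have hpos : (0:ℝ) < 1 + u := by linarith
  have hlog : Real.log (1 + u) ≥ 1 - (1 + u)⁻¹ := by
    have hl := Real.log_le_sub_one_of_pos (x := (1 + u)⁻¹) (by positivity)
    rw [Real.log_inv] at hl
    linarith
  have hfr : 1 - (1 + u)⁻¹ = u / (1 + u) := by field_simp; ring
  have hdiv : u / 2 ≤ u / (1 + u) := by
    apply div_le_div_of_nonneg_left h0 hpos (by linarith)
  linarith [hfr ▸ hlog]

lemma epoch_telescope (g : ℕ → ℝ) (T : ℕ) :
    ∑ t ∈ Finset.Ico 1 (T + 1), (g (t + 1) - g t) = g (T + 1) - g 1 := by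
  induction T with
  | zero => simp
  | succ n ih =>
    rw [Finset.sum_Ico_succ_top (by omega), ih]
    ring
end EpochAux
/-- Harmonic-sum bound over epochs: if `V_t = λ I + ∑_{s<t} a_s a_sᵀ` with
`‖a_t‖² ≤ λ`, and `τ(t) ≤ t` with `det(V_t) ≤ 2 det(V_{τ(t)})`, then
`∑_{t=1}^T √(a_tᵀ V_{τ(t)}⁻¹ a_t) ≤ √(10 T d log T)`. -/
theorem epoch_harmonic_sum_bound (d T : ℕ) (hd : 1 ≤ d) (hT : 4 ≤ T)
    (lam : ℝ) (hlam : 0 < lam)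
    (a : ℕ → Fin d → ℝ)
    (ha : ∀ t ∈ Finset.Icc 1 T, ∑ i, (a t i) ^ 2 ≤ lam)
    (V : ℕ → Matrix (Fin d) (Fin d) ℝ)
    (hV : ∀ t, V t = lam • (1 : Matrix (Fin d) (Fin d) ℝ) +
      ∑ s ∈ Finset.Ico 1 t, Matrix.vecMulVec (a s) (a s))
    (τ : ℕ → ℕ)
    (hτ : ∀ t ∈ Finset.Icc 1 T, 1 ≤ τ t ∧ τ t ≤ t ∧ (V t).det ≤ 2 * (V (τ t)).det) :
    ∑ t ∈ Finset.Icc 1 T,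
        Real.sqrt (dotProduct (a t) ((V (τ t))⁻¹.mulVec (a t))) ≤
      Real.sqrt (10 * T * d * Real.log T) := by
  classical
  have hd0 : (0:ℝ) ≤ d := Nat.cast_nonneg d
  have hT0 : (0:ℝ) ≤ T := Nat.cast_nonneg T
  have hT4 : (4:ℝ) ≤ T := by exact_mod_cast hT
  have hsumpsd : ∀ s : Finset ℕ, (∑ x ∈ s, Matrix.vecMulVec (a x) (a x)).PosSemidef :=
    fun s => Finset.sum_induction _ _ (fun p q hp hq => hp.add hq) Matrix.PosSemidef.zero
      (fun x _ => epoch_vecMulVec_psd (a x))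
  have hlamI : (lam • (1 : Matrix (Fin d) (Fin d) ℝ)).PosDef := by
    have h1 : lam • (1 : Matrix (Fin d) (Fin d) ℝ) = Matrix.diagonal (fun _ => lam) := by
      ext i j
      by_cases hij : i = j <;> simp [hij, Matrix.one_apply]
    rw [h1]
    exact Matrix.posDef_diagonal_iff.mpr fun _ => hlam
  have hVpos : ∀ t, (V t).PosDef := fun t => by
    rw [hV t]; exact hlamI.add_posSemidef (hsumpsd _)
  have hVlow : ∀ t, ((V t) - lam • 1).PosSemidef := fun t => by
    rw [hV t, add_sub_cancel_left]; exact hsumpsd _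
  have hVmono : ∀ s t : ℕ, s ≤ t → ((V t) - (V s)).PosSemidef := by
    intro s t hst
    have hsub : Finset.Ico 1 s ⊆ Finset.Ico 1 t := Finset.Ico_subset_Ico le_rfl hst
    have hsplit : ∑ x ∈ Finset.Ico 1 t, Matrix.vecMulVec (a x) (a x)
        = ∑ x ∈ Finset.Ico 1 t \ Finset.Ico 1 s, Matrix.vecMulVec (a x) (a x)
          + ∑ x ∈ Finset.Ico 1 s, Matrix.vecMulVec (a x) (a x) :=
      (Finset.sum_sdiff hsub).symm
    have heq : V t - V s
        = ∑ x ∈ Finset.Ico 1 t \ Finset.Ico 1 s, Matrix.vecMulVec (a x) (a x) := by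
      rw [hV t, hV s, hsplit]
      abel
    rw [heq]
    exact hsumpsd _
  set w : ℕ → ℝ := fun t => (a t) ⬝ᵥ (V t)⁻¹ *ᵥ (a t) with hwdef
  set w' : ℕ → ℝ := fun t => (a t) ⬝ᵥ (V (τ t))⁻¹ *ᵥ (a t) with hw'def
  have hw0 : ∀ t, 0 ≤ w t := fun t => epoch_quad_inv_nonneg (hVpos t) _
  have hw'0 : ∀ t, 0 ≤ w' t := fun t => epoch_quad_inv_nonneg (hVpos (τ t)) _
  have hadot : ∀ t ∈ Finset.Icc 1 T, (a t) ⬝ᵥ (a t) ≤ lam := by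
    intro t ht
    have he : (a t) ⬝ᵥ (a t) = ∑ i, (a t i) ^ 2 := by simp [dotProduct, pow_two]
    rw [he]; exact ha t ht
  have hw1 : ∀ t ∈ Finset.Icc 1 T, w t ≤ 1 := fun t ht =>
    epoch_quad_inv_le_one (hVpos t) hlam (hVlow t) (hadot t ht)
  have hww : ∀ t ∈ Finset.Icc 1 T, w' t ≤ 2 * w t := by
    intro t ht
    obtain ⟨h1, h2, h3⟩ := hτ t ht
    have hcmp := key_comparison (hVpos (τ t)) (hVpos t) (hVmono _ _ h2) (a t)
    have hratio : (V t).det / (V (τ t)).det ≤ 2 := by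
      rw [div_le_iff₀ (hVpos (τ t)).det_pos]; linarith
    calc w' t ≤ ((V t).det / (V (τ t)).det) * w t := hcmp
      _ ≤ 2 * w t := mul_le_mul_of_nonneg_right hratio (hw0 t)
  set g : ℕ → ℝ := fun t => Real.log (V t).det with hgdef
  have hstep : ∀ t ∈ Finset.Icc 1 T, w t ≤ 2 * (g (t+1) - g t) := by
    intro t ht
    have h1t : 1 ≤ t := (Finset.mem_Icc.mp ht).1
    have hVsucc : V (t+1) = V t + Matrix.vecMulVec (a t) (a t) := by
      rw [hV (t+1), hV t, Finset.sum_Ico_succ_top h1t]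
      abel
    have hdet : (V (t+1)).det = (V t).det * (1 + w t) := by
      rw [hVsucc, epoch_det_rank_one (hVpos t)]
    have hgd : g (t+1) - g t = Real.log (1 + w t) := by
      simp only [hgdef]
      rw [hdet, Real.log_mul (hVpos t).det_pos.ne'
        (by linarith [hw0 t] : (1:ℝ) + w t ≠ 0)]
      ring
    rw [hgd]
    exact epoch_log_bound (hw0 t) (hw1 t ht)
  have htele : ∑ t ∈ Finset.Icc 1 T, (g (t+1) - g t) = g (T+1) - g 1 := by
    rw [show Finset.Icc 1 T = Finset.Ico 1 (T+1) from (Finset.Ico_add_one_right_eq_Icc 1 T).symm]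
    exact epoch_telescope g T
  have hsumw : ∑ t ∈ Finset.Icc 1 T, w t ≤ 2 * (g (T+1) - g 1) := by
    calc ∑ t ∈ Finset.Icc 1 T, w t ≤ ∑ t ∈ Finset.Icc 1 T, 2 * (g (t+1) - g t) :=
          Finset.sum_le_sum hstep
      _ = 2 * ∑ t ∈ Finset.Icc 1 T, (g (t+1) - g t) := by rw [Finset.mul_sum]
      _ = 2 * (g (T+1) - g 1) := by rw [htele]
  have hg1 : g 1 = d * Real.log lam := by
    simp only [hgdef]
    rw [hV 1]
    have hempty : Finset.Ico 1 1 = (∅ : Finset ℕ) := by simp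
    rw [hempty, Finset.sum_empty, add_zero, Matrix.det_smul, Matrix.det_one, mul_one,
      Fintype.card_fin, Real.log_pow]
  have htrace : (V (T+1)).trace ≤ lam * d + T * lam := by
    rw [hV (T+1), Matrix.trace_add, Matrix.trace_smul, Matrix.trace_one, Matrix.trace_sum]
    have htrv : ∀ s, (Matrix.vecMulVec (a s) (a s)).trace = ∑ i, (a s i)^2 := by
      intro s
      simp [Matrix.trace, Matrix.diag, Matrix.vecMulVec_apply, pow_two]
    rw [Finset.sum_congr rfl fun s _ => htrv s]
    rw [Finset.Ico_add_one_right_eq_Icc 1 T]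
    have hsle : ∑ s ∈ Finset.Icc 1 T, ∑ i, (a s i)^2 ≤ ∑ s ∈ Finset.Icc 1 T, lam :=
      Finset.sum_le_sum ha
    rw [Finset.sum_const, Nat.card_Icc, nsmul_eq_mul] at hsle
    simp only [Nat.add_sub_cancel] at hsle
    have hsm : lam • ((Fintype.card (Fin d) : ℝ)) = lam * d := by
      rw [Fintype.card_fin, smul_eq_mul]
    rw [hsm]
    linarith
  have hdetT : (V (T+1)).det ≤ (lam * (1 + T)) ^ d := by
    have hb := epoch_det_le (hVpos (T+1)) hlam (c := (T:ℝ) * lam) (by positivity)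
      (hVlow (T+1)) htrace
    rw [show lam + (T:ℝ) * lam = lam * (1 + T) by ring] at hb
    exact hb
  have hgT : g (T+1) ≤ d * Real.log (lam * (1 + T)) := by
    simp only [hgdef]
    calc Real.log (V (T+1)).det ≤ Real.log ((lam * (1+(T:ℝ)))^d) :=
          Real.log_le_log (hVpos (T+1)).det_pos hdetT
      _ = d * Real.log (lam * (1+(T:ℝ))) := by rw [Real.log_pow]
  have hlogmul : Real.log (lam * (1 + (T:ℝ))) = Real.log lam + Real.log (1 + (T:ℝ)) :=
    Real.log_mul hlam.ne' (by positivity)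
  have hT2 : Real.log (1 + (T:ℝ)) ≤ 2 * Real.log T := by
    rw [show (2:ℝ) * Real.log T = Real.log ((T:ℝ)^2) by rw [Real.log_pow]; norm_num]
    apply Real.log_le_log (by positivity)
    nlinarith
  have hlogT0 : (0:ℝ) ≤ Real.log T := Real.log_nonneg (by linarith)
  have hsumw' : ∑ t ∈ Finset.Icc 1 T, w' t ≤ 8 * ((d:ℝ) * Real.log T) := by
    have hkey : g (T+1) - g 1 ≤ (d:ℝ) * (2 * Real.log T) := by
      have h5 : g (T+1) ≤ (d:ℝ) * (Real.log lam + Real.log (1+(T:ℝ))) := by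
        rw [← hlogmul]; exact hgT
      have h6 : (d:ℝ) * Real.log (1+(T:ℝ)) ≤ (d:ℝ) * (2*Real.log T) :=
        mul_le_mul_of_nonneg_left hT2 hd0
      have h7 : (d:ℝ) * (Real.log lam + Real.log (1+(T:ℝ)))
          = (d:ℝ) * Real.log lam + (d:ℝ) * Real.log (1+(T:ℝ)) := by ring
      rw [h7] at h5
      linarith [hg1]
    calc ∑ t ∈ Finset.Icc 1 T, w' t ≤ ∑ t ∈ Finset.Icc 1 T, 2 * w t :=
          Finset.sum_le_sum hww
      _ = 2 * ∑ t ∈ Finset.Icc 1 T, w t := by rw [Finset.mul_sum]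
      _ ≤ 2 * (2 * (g (T+1) - g 1)) := by linarith [hsumw]
      _ ≤ 8 * ((d:ℝ) * Real.log T) := by nlinarith [hkey]
  set S := ∑ t ∈ Finset.Icc 1 T, Real.sqrt (w' t) with hSdef
  have hS0 : 0 ≤ S := Finset.sum_nonneg fun t _ => Real.sqrt_nonneg _
  have hCS : S ^ 2 ≤ (T:ℝ) * ∑ t ∈ Finset.Icc 1 T, w' t := by
    have h := Finset.sum_mul_sq_le_sq_mul_sq (Finset.Icc 1 T) (fun _ => (1:ℝ))
      (fun t => Real.sqrt (w' t))
    simp only [one_mul, one_pow] at h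
    rw [Finset.sum_const, nsmul_eq_mul, mul_one, Nat.card_Icc, Nat.add_sub_cancel] at h
    have hsq : ∑ t ∈ Finset.Icc 1 T, Real.sqrt (w' t) ^ 2 = ∑ t ∈ Finset.Icc 1 T, w' t :=
      Finset.sum_congr rfl fun t _ => Real.sq_sqrt (hw'0 t)
    rw [hsq] at h
    exact h
  have hfinal : S ^ 2 ≤ 10 * (T:ℝ) * d * Real.log T := by
    calc S^2 ≤ (T:ℝ) * ∑ t ∈ Finset.Icc 1 T, w' t := hCS
      _ ≤ (T:ℝ) * (8 * ((d:ℝ) * Real.log T)) :=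
          mul_le_mul_of_nonneg_left hsumw' hT0
      _ ≤ 10 * (T:ℝ) * d * Real.log T := by
          nlinarith [mul_nonneg (mul_nonneg hT0 hd0) hlogT0]
  calc S = Real.sqrt (S^2) := (Real.sqrt_sq hS0).symm
    _ ≤ Real.sqrt (10 * (T:ℝ) * d * Real.log T) := Real.sqrt_le_sqrt hfinal
end

section
/- Let (Ω, 𝔉, P) be a probability space with σ-algebras 𝔉_0 ⊆ 𝔉_1 ⊆ ⋯ ⊆ 𝔉_T ⊆ 𝔉 (with the convention 𝔉_s := 𝔉_0 for s ≤ 0). Let H ≥ 1 with 2H ≤ T, let δ ∈ (0,1), and let X_1, …, X_T be random variables with X_t measurable with respect to 𝔉_t and 0 ≤ X_t ≤ 1 almost surely. Then with probability at least 1 − δ: Σ_{t=1}^{T} E[X_t | 𝔉_{t−2H}] ≤ 2 Σ_{t=1}^{T} X_t + 8 H log(2T/δ). -/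
open MeasureTheory
open scoped BigOperators


-- convexity bound: exp(-(log 2)*x) ≤ 1 - x/2 for x ∈ [0,1]
lemma bcm_exp_convex {x : ℝ} (h0 : 0 ≤ x) (h1 : x ≤ 1) :
    Real.exp (-(Real.log 2 * x)) ≤ 1 - x / 2 := by
  have h := convexOn_exp.2 (Set.mem_univ (0:ℝ)) (Set.mem_univ (-Real.log 2))
    (by linarith : (0:ℝ) ≤ 1 - x) h0 (by ring)
  simp only [smul_eq_mul, mul_zero, zero_add, Real.exp_zero] at h
  rw [Real.exp_neg, Real.exp_log (by norm_num : (0:ℝ) < 2)] at h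
  have hx : x * -Real.log 2 = -(Real.log 2 * x) := by ring
  rw [hx] at h
  calc Real.exp (-(Real.log 2 * x)) ≤ (1-x) * 1 + x * (2:ℝ)⁻¹ := h
  _ = 1 - x/2 := by ring

-- integrable of bounded
lemma bcm_integrable_of_bounds {Ω : Type*} [m0 : MeasurableSpace Ω] {μ : Measure Ω}
    [IsProbabilityMeasure μ] {f : Ω → ℝ} (hf : AEStronglyMeasurable f μ) {a b : ℝ}
    (h : ∀ᵐ ω ∂μ, a ≤ f ω ∧ f ω ≤ b) : Integrable f μ := by
  refine Integrable.mono' (integrable_const (max |a| |b|)) hf ?_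
  filter_upwards [h] with ω hω
  rw [Real.norm_eq_abs]
  exact abs_le_max_abs_abs hω.1 hω.2

-- integrability of exp of sums of bounded-above functions
lemma bcm_integrable_exp_sum {Ω : Type*} [m0 : MeasurableSpace Ω] {μ : Measure Ω}
    [IsProbabilityMeasure μ] (S : Finset ℕ) (f : ℕ → Ω → ℝ)
    (hmeas : ∀ t ∈ S, Measurable (f t))
    (hb : ∀ t ∈ S, ∀ᵐ ω ∂μ, f t ω ≤ 1/2) :
    Integrable (fun ω => Real.exp (∑ t ∈ S, f t ω)) μ := by
  refine Integrable.mono' (integrable_const (Real.exp (S.card * (1/2))))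
    ((Real.measurable_exp.comp (Finset.measurable_sum S hmeas)).aestronglyMeasurable) ?_
  have hall : ∀ᵐ ω ∂μ, ∀ t ∈ (S : Set ℕ), f t ω ≤ 1/2 :=
    (ae_ball_iff S.countable_toSet).2 (fun t ht => hb t ht)
  filter_upwards [hall] with ω hω
  rw [Real.norm_eq_abs, abs_of_pos (Real.exp_pos _), Real.exp_le_exp]
  calc ∑ t ∈ S, f t ω ≤ S.card • (1/2 : ℝ) :=
        Finset.sum_le_card_nsmul _ _ _ (fun t ht => hω t ht)
  _ = S.card * (1/2) := by simp [nsmul_eq_mul]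


lemma bcm_key {Ω : Type*} [m0 : MeasurableSpace Ω]
    (μ : Measure Ω) [IsProbabilityMeasure μ] (H : ℕ)
    (F : ℕ → MeasurableSpace Ω) (hFmono : Monotone F) (hFle : ∀ t, F t ≤ m0)
    (X : ℕ → Ω → ℝ) (hXmeas : ∀ t, Measurable[F t] (X t)) :
    ∀ (S : Finset ℕ),
    (∀ t ∈ S, ∀ᵐ ω ∂μ, 0 ≤ X t ω ∧ X t ω ≤ 1) →
    (∀ s ∈ S, ∀ t ∈ S, s < t → s ≤ t - 2 * H) →
    ∫ ω, Real.exp (∑ t ∈ S,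
      ((1/2) * (μ[X t | F (t - 2*H)]) ω - Real.log 2 * X t ω)) ∂μ ≤ 1 := by
  intro S
  induction S using Finset.induction_on_max with
  | empty => intro _ _; simp
  | insert a s hmaxlt ih =>
    intro hX01 hgap
    have ha : a ∉ s := fun h => lt_irrefl a (hmaxlt a h)
    have hXm : ∀ t, Measurable (X t) := fun t => (hXmeas t).mono (hFle t) le_rfl
    have hXint : ∀ t ∈ insert a s, Integrable (X t) μ := fun t ht =>
      bcm_integrable_of_bounds (hXm t).aestronglyMeasurable (hX01 t ht)
    set g : ℕ → Ω → ℝ := fun t => μ[X t | F (t - 2*H)] with hgdef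
    have hgm : ∀ t, Measurable (g t) :=
      fun t => stronglyMeasurable_condExp.measurable.mono (hFle _) le_rfl
    have hg01 : ∀ t ∈ insert a s, ∀ᵐ ω ∂μ, 0 ≤ g t ω ∧ g t ω ≤ 1 := by
      intro t ht
      have h0 : 0 ≤ᵐ[μ] g t := condExp_nonneg ((hX01 t ht).mono fun ω h => h.1)
      have h1 : g t ≤ᵐ[μ] μ[(fun _ => (1:ℝ)) | F (t - 2*H)] :=
        condExp_mono (hXint t ht) (integrable_const 1) ((hX01 t ht).mono fun ω h => h.2)
      rw [condExp_const (hFle _)] at h1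
      filter_upwards [h0, h1] with ω h2 h3
      exact ⟨h2, h3⟩
    set f : ℕ → Ω → ℝ := fun t ω => (1/2) * g t ω - Real.log 2 * X t ω with hfdef
    have hfm : ∀ t, Measurable (f t) := fun t =>
      ((hgm t).const_mul _).sub ((hXm t).const_mul _)
    have hl2 : 0 ≤ Real.log 2 := Real.log_nonneg (by norm_num)
    have hfle : ∀ t ∈ insert a s, ∀ᵐ ω ∂μ, f t ω ≤ 1/2 := by
      intro t ht
      filter_upwards [hX01 t ht, hg01 t ht] with ω hX hg
      have : f t ω = (1/2) * g t ω - Real.log 2 * X t ω := rfl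
      rw [this]
      nlinarith [hX.1, hg.2]
    set A : Ω → ℝ := fun ω => Real.exp ((1/2) * g a ω + ∑ t ∈ s, f t ω) with hA
    set B : Ω → ℝ := fun ω => Real.exp (-(Real.log 2 * X a ω)) with hB
    have hABeq : A * B = fun ω => Real.exp (∑ t ∈ insert a s, f t ω) := by
      funext ω
      rw [Pi.mul_apply, Finset.sum_insert ha, hA, hB, ← Real.exp_add]
      congr 1
      have : f a ω = (1/2) * g a ω - Real.log 2 * X a ω := rfl
      rw [this]; ring
    have hAsm : StronglyMeasurable[F (a - 2*H)] A := by
      have hga : Measurable[F (a - 2*H)] (g a) := stronglyMeasurable_condExp.measurable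
      have hfs : ∀ t ∈ s, Measurable[F (a - 2*H)] (f t) := by
        intro t ht
        have hlt := hmaxlt t ht
        have hle1 : F (t - 2*H) ≤ F (a - 2*H) := hFmono (by omega)
        have hle2 : F t ≤ F (a - 2*H) := hFmono
          (hgap t (Finset.mem_insert_of_mem ht) a (Finset.mem_insert_self a s) hlt)
        exact ((((stronglyMeasurable_condExp (f := X t)).measurable.mono hle1
          le_rfl).const_mul _).sub (((hXmeas t).mono hle2 le_rfl).const_mul _))
      have hsum : Measurable[F (a - 2*H)] (fun ω => (1/2) * g a ω + ∑ t ∈ s, f t ω) :=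
        (hga.const_mul _).add (Finset.measurable_sum s hfs)
      exact (Real.measurable_exp.comp hsum).stronglyMeasurable
    have hintAB : Integrable (A * B) μ := by
      rw [hABeq]
      exact bcm_integrable_exp_sum _ f (fun t _ => hfm t) hfle
    have hXa01 := hX01 a (Finset.mem_insert_self a s)
    have hintXa := hXint a (Finset.mem_insert_self a s)
    have hintB : Integrable B μ := by
      refine bcm_integrable_of_bounds
        ((Real.measurable_exp.comp (((hXm a).const_mul _).neg)).aestronglyMeasurable)
        (a := 0) (b := 1) ?_
      filter_upwards [hXa01] with ω hω
      refine ⟨(Real.exp_pos _).le, ?_⟩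
      have hle : -(Real.log 2 * X a ω) ≤ 0 := by nlinarith [hω.1]
      calc B ω = Real.exp (-(Real.log 2 * X a ω)) := rfl
      _ ≤ Real.exp 0 := Real.exp_le_exp.mpr hle
      _ = 1 := Real.exp_zero
    have hint1X : Integrable (fun ω => 1 - X a ω / 2) μ :=
      (integrable_const 1).sub (hintXa.div_const 2)
    have hBle : B ≤ᵐ[μ] fun ω => 1 - X a ω / 2 := by
      filter_upwards [hXa01] with ω hω
      exact bcm_exp_convex hω.1 hω.2
    have hcondB : μ[B|F (a - 2*H)] ≤ᵐ[μ] μ[(fun ω => 1 - X a ω / 2)|F (a - 2*H)] :=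
      condExp_mono hintB hint1X hBle
    have hcondcalc : μ[(fun ω => 1 - X a ω / 2)|F (a - 2*H)] =ᵐ[μ] fun ω => 1 - g a ω / 2 := by
      have h1 : (fun ω => 1 - X a ω / 2) = (fun _ => (1:ℝ)) - (2⁻¹ : ℝ) • (X a) := by
        funext ω
        simp only [Pi.sub_apply, Pi.smul_apply, smul_eq_mul]
        ring
      rw [h1]
      refine (condExp_sub (integrable_const (1:ℝ)) (hintXa.smul (2⁻¹:ℝ)) (F (a - 2*H))).trans ?_
      have h3 := condExp_smul (μ := μ) (m := F (a - 2*H)) (2⁻¹:ℝ) (X a)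
      rw [condExp_const (hFle _)]
      filter_upwards [h3] with ω hω
      simp only [Pi.sub_apply, Pi.smul_apply, smul_eq_mul] at hω ⊢
      rw [hω]
      have : (μ[X a|F (a - 2*H)]) ω = g a ω := rfl
      rw [this]; ring
    have hBexp : μ[B|F (a - 2*H)] ≤ᵐ[μ] fun ω => Real.exp (-((1/2) * g a ω)) := by
      filter_upwards [hcondB, hcondcalc] with ω h1 h2
      rw [h2] at h1
      have h4 := Real.add_one_le_exp (-((1/2) * g a ω))
      calc (μ[B|F (a - 2*H)]) ω ≤ 1 - g a ω / 2 := h1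
      _ ≤ Real.exp (-((1/2) * g a ω)) := by linarith
    have hintexpP : Integrable (fun ω => Real.exp (∑ t ∈ s, f t ω)) μ :=
      bcm_integrable_exp_sum _ f (fun t _ => hfm t)
        (fun t ht => hfle t (Finset.mem_insert_of_mem ht))
    have hpull : μ[A * B|F (a - 2*H)] =ᵐ[μ] A * μ[B|F (a - 2*H)] :=
      condExp_mul_of_stronglyMeasurable_left hAsm hintAB hintB
    have hle2 : μ[A * B|F (a - 2*H)] ≤ᵐ[μ] fun ω => Real.exp (∑ t ∈ s, f t ω) := by
      filter_upwards [hpull, hBexp] with ω h1 h2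
      rw [h1, Pi.mul_apply]
      calc A ω * (μ[B|F (a - 2*H)]) ω ≤ A ω * Real.exp (-((1/2) * g a ω)) :=
        mul_le_mul_of_nonneg_left h2 (Real.exp_pos _).le
      _ = Real.exp (∑ t ∈ s, f t ω) := by
        rw [hA, ← Real.exp_add]
        congr 1
        ring
    have hmain : ∫ ω, (A * B) ω ∂μ ≤ 1 := by
      rw [← integral_condExp (hFle (a - 2*H)) (f := A * B)]
      calc ∫ ω, (μ[A * B|F (a - 2*H)]) ω ∂μ ≤ ∫ ω, Real.exp (∑ t ∈ s, f t ω) ∂μ :=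
        integral_mono_ae integrable_condExp hintexpP hle2
      _ ≤ 1 := ih (fun t ht => hX01 t (Finset.mem_insert_of_mem ht))
            (fun u hu t ht h => hgap u (Finset.mem_insert_of_mem hu) t
              (Finset.mem_insert_of_mem ht) h)
    rw [hABeq] at hmain
    exact hmain


/-- Bernstein-type multiplicative concentration for block-dependent
sequences: if `X_t` is `𝔉_t`-measurable with `0 ≤ X_t ≤ 1` a.s., then with probability
at least `1 − δ`, `∑_{t=1}^T E[X_t | 𝔉_{t−2H}] ≤ 2 ∑_{t=1}^T X_t + 8 H log(2T/δ)`. -/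
theorem block_concentration_multiplicative
    {Ω : Type*} [m0 : MeasurableSpace Ω] (μ : Measure Ω) [IsProbabilityMeasure μ]
    (T H : ℕ) (hH : 1 ≤ H) (hHT : 2 * H ≤ T)
    (δ : ℝ) (hδ0 : 0 < δ) (hδ1 : δ < 1)
    (F : ℕ → MeasurableSpace Ω) (hFmono : Monotone F) (hFle : ∀ t, F t ≤ m0)
    (X : ℕ → Ω → ℝ)
    (hXmeas : ∀ t, Measurable[F t] (X t))
    (hX01 : ∀ t ∈ Finset.Icc 1 T, ∀ᵐ ω ∂μ, 0 ≤ X t ω ∧ X t ω ≤ 1) :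
    ENNReal.ofReal (1 - δ) ≤
      μ {ω | ∑ t ∈ Finset.Icc 1 T, (μ[X t | F (t - 2 * H)]) ω ≤
        2 * ∑ t ∈ Finset.Icc 1 T, X t ω + 8 * H * Real.log (2 * T / δ)} := by
  have hXm : ∀ t, Measurable (X t) := fun t => (hXmeas t).mono (hFle t) le_rfl
  have hXint : ∀ t ∈ Finset.Icc 1 T, Integrable (X t) μ := fun t ht =>
    bcm_integrable_of_bounds (hXm t).aestronglyMeasurable (hX01 t ht)
  set g : ℕ → Ω → ℝ := fun t => μ[X t | F (t - 2*H)] with hgdef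
  have hgm : ∀ t, Measurable (g t) :=
    fun t => stronglyMeasurable_condExp.measurable.mono (hFle _) le_rfl
  have hg01 : ∀ t ∈ Finset.Icc 1 T, ∀ᵐ ω ∂μ, 0 ≤ g t ω ∧ g t ω ≤ 1 := by
    intro t ht
    have h0 : 0 ≤ᵐ[μ] g t := condExp_nonneg ((hX01 t ht).mono fun ω h => h.1)
    have h1 : g t ≤ᵐ[μ] μ[(fun _ => (1:ℝ)) | F (t - 2*H)] :=
      condExp_mono (hXint t ht) (integrable_const 1) ((hX01 t ht).mono fun ω h => h.2)
    rw [condExp_const (hFle _)] at h1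
    filter_upwards [h0, h1] with ω h2 h3
    exact ⟨h2, h3⟩
  set f : ℕ → Ω → ℝ := fun t ω => (1/2) * g t ω - Real.log 2 * X t ω with hfdef
  have hfm : ∀ t, Measurable (f t) := fun t =>
    ((hgm t).const_mul _).sub ((hXm t).const_mul _)
  have hl2 : 0 ≤ Real.log 2 := Real.log_nonneg (by norm_num)
  have hl2' : Real.log 2 ≤ 1 := by
    have := Real.log_le_sub_one_of_pos (by norm_num : (0:ℝ) < 2)
    linarith
  have hfle : ∀ t ∈ Finset.Icc 1 T, ∀ᵐ ω ∂μ, f t ω ≤ 1/2 := by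
    intro t ht
    filter_upwards [hX01 t ht, hg01 t ht] with ω hX hg
    have : f t ω = (1/2) * g t ω - Real.log 2 * X t ω := rfl
    rw [this]
    nlinarith [hX.1, hg.2]
  -- residue classes
  set Sj : ℕ → Finset ℕ := fun j => (Finset.Icc 1 T).filter (fun t => t % (2*H) = j)
    with hSjdef
  have hSjsub : ∀ j, Sj j ⊆ Finset.Icc 1 T := fun j => Finset.filter_subset _ _
  have hgap : ∀ j, ∀ s ∈ Sj j, ∀ t ∈ Sj j, s < t → s ≤ t - 2*H := by
    intro j s hs t ht hlt
    rw [hSjdef, Finset.mem_filter] at hs ht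
    have hmod : s ≡ t [MOD 2*H] := by
      unfold Nat.ModEq
      rw [hs.2, ht.2]
    have hdvd : 2*H ∣ t - s := (Nat.modEq_iff_dvd' hlt.le).mp hmod
    have h2H : 2*H ≤ t - s := Nat.le_of_dvd (by omega) hdvd
    omega
  -- Chernoff for each residue class
  set c : ℝ := Real.log (2*H/δ) with hcdef
  have hHpos : (0:ℝ) < H := by exact_mod_cast hH
  have h2Hδ : (0:ℝ) < 2*H/δ := by positivity
  have h1H : (1:ℝ) ≤ H := by exact_mod_cast hH
  have hc0 : 0 ≤ c := Real.log_nonneg (by rw [le_div_iff₀ hδ0]; nlinarith)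
  set bad : ℕ → Set Ω := fun j => {ω | c < ∑ t ∈ Sj j, f t ω} with hbaddef
  have hbad : ∀ j, μ (bad j) ≤ ENNReal.ofReal (δ/(2*H)) := by
    intro j
    set Y : Ω → ℝ := fun ω => Real.exp (∑ t ∈ Sj j, f t ω) with hYdef
    have hintY : Integrable Y μ :=
      bcm_integrable_exp_sum _ f (fun t _ => hfm t)
        (fun t ht => hfle t (hSjsub j ht))
    have hintle : ∫ ω, Y ω ∂μ ≤ 1 :=
      bcm_key μ H F hFmono hFle X hXmeas (Sj j)
        (fun t ht => hX01 t (hSjsub j ht)) (hgap j)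
    have hmarkov := mul_meas_ge_le_integral_of_nonneg
      (ae_of_all μ (fun ω => (Real.exp_pos (∑ t ∈ Sj j, f t ω)).le)) hintY (Real.exp c)
    have hsub : bad j ⊆ {ω | Real.exp c ≤ Y ω} := by
      intro ω hω
      exact Real.exp_le_exp.mpr hω.le
    have htoreal : (μ {ω | Real.exp c ≤ Y ω}).toReal ≤ Real.exp (-c) := by
      have hpos : 0 < Real.exp c := Real.exp_pos c
      rw [Real.exp_neg, ← one_div, le_div_iff₀ hpos]
      calc (μ {ω | Real.exp c ≤ Y ω}).toReal * Real.exp c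
          = Real.exp c * (μ {ω | Real.exp c ≤ Y ω}).toReal := mul_comm _ _
      _ ≤ ∫ ω, Y ω ∂μ := hmarkov
      _ ≤ 1 := hintle
    have hexpc : Real.exp (-c) = δ/(2*H) := by
      rw [Real.exp_neg, hcdef, Real.exp_log h2Hδ, inv_div]
    calc μ (bad j) ≤ μ {ω | Real.exp c ≤ Y ω} := measure_mono hsub
    _ = ENNReal.ofReal ((μ {ω | Real.exp c ≤ Y ω}).toReal) :=
        (ENNReal.ofReal_toReal (measure_ne_top μ _)).symm
    _ ≤ ENNReal.ofReal (Real.exp (-c)) := ENNReal.ofReal_le_ofReal htoreal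
    _ = ENNReal.ofReal (δ/(2*H)) := by rw [hexpc]
  -- union bound
  set badU : Set Ω := ⋃ j ∈ Finset.range (2*H), bad j with hbadUdef
  have hHne : (H:ℝ) ≠ 0 := ne_of_gt hHpos
  have hbadU : μ badU ≤ ENNReal.ofReal δ := by
    calc μ badU ≤ ∑ j ∈ Finset.range (2*H), μ (bad j) := measure_biUnion_finset_le _ _
    _ ≤ ∑ _j ∈ Finset.range (2*H), ENNReal.ofReal (δ/(2*H)) :=
        Finset.sum_le_sum (fun j _ => hbad j)
    _ = (2*H) • ENNReal.ofReal (δ/(2*H)) := by rw [Finset.sum_const, Finset.card_range]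
    _ = ENNReal.ofReal δ := by
        rw [nsmul_eq_mul, ← ENNReal.ofReal_natCast (2*H),
          ← ENNReal.ofReal_mul (by positivity)]
        congr 1
        push_cast
        field_simp
  -- pointwise consequence outside badU
  have hpt : ∀ ω, ω ∉ badU → (∀ t ∈ Finset.Icc 1 T, 0 ≤ X t ω) →
      ∑ t ∈ Finset.Icc 1 T, g t ω ≤
        2 * ∑ t ∈ Finset.Icc 1 T, X t ω + 8 * H * Real.log (2 * T / δ) := by
    intro ω hω hnn
    have hnotbad : ∀ j ∈ Finset.range (2*H), ∑ t ∈ Sj j, f t ω ≤ c := by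
      intro j hj
      by_contra h
      push_neg at h
      exact hω (Set.mem_biUnion hj h)
    have hfib := Finset.sum_fiberwise_of_maps_to
      (s := Finset.Icc 1 T) (t := Finset.range (2*H)) (g := fun t => t % (2*H))
      (fun t _ => Finset.mem_range.mpr (Nat.mod_lt t (by omega))) (fun t => f t ω)
    have hsumf : ∑ t ∈ Finset.Icc 1 T, f t ω ≤ (2*(H:ℝ)) * c := by
      rw [← hfib]
      calc ∑ j ∈ Finset.range (2*H),
            ∑ t ∈ (Finset.Icc 1 T).filter (fun t => t % (2*H) = j), f t ω
          ≤ (Finset.range (2*H)).card • c :=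
            Finset.sum_le_card_nsmul _ _ _ (fun j hj => hnotbad j hj)
      _ = (2*(H:ℝ)) * c := by
          rw [Finset.card_range, nsmul_eq_mul]
          push_cast
          ring
    have hexp : ∑ t ∈ Finset.Icc 1 T, f t ω
        = (1/2) * ∑ t ∈ Finset.Icc 1 T, g t ω
          - Real.log 2 * ∑ t ∈ Finset.Icc 1 T, X t ω := by
      rw [Finset.mul_sum, Finset.mul_sum, ← Finset.sum_sub_distrib]
    have hSX : 0 ≤ ∑ t ∈ Finset.Icc 1 T, X t ω := Finset.sum_nonneg hnn
    have hT2 : (2:ℝ) ≤ T := by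
      have : 2 ≤ T := le_trans (by omega) hHT
      exact_mod_cast this
    have hHTr : (H:ℝ) ≤ T := by
      have : H ≤ T := by omega
      exact_mod_cast this
    have hcle : c ≤ Real.log (2*T/δ) := by
      rw [hcdef]
      have : (2*(H:ℝ))/δ ≤ 2*T/δ := by gcongr
      exact Real.log_le_log h2Hδ this
    have hL0 : 0 ≤ Real.log (2*T/δ) := by
      apply Real.log_nonneg
      rw [le_div_iff₀ hδ0]
      nlinarith
    set GG := ∑ t ∈ Finset.Icc 1 T, g t ω
    set SX := ∑ t ∈ Finset.Icc 1 T, X t ω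
    set L := Real.log (2*T/δ)
    rw [hexp] at hsumf
    have h1 : Real.log 2 * SX ≤ SX := by nlinarith
    have h2 : (2*(H:ℝ))*c ≤ (2*H)*L := by nlinarith
    have h3 : 0 ≤ (H:ℝ)*L := by positivity
    linarith
  -- assemble
  have hae : ∀ᵐ ω ∂μ, ∀ t ∈ Finset.Icc 1 T, 0 ≤ X t ω := by
    rw [Filter.eventually_all_finset]
    exact fun t ht => (hX01 t ht).mono fun ω h => h.1
  have hfinal : μ badUᶜ ≤
      μ {ω | ∑ t ∈ Finset.Icc 1 T, (μ[X t | F (t - 2 * H)]) ω ≤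
        2 * ∑ t ∈ Finset.Icc 1 T, X t ω + 8 * H * Real.log (2 * T / δ)} := by
    refine measure_mono_ae (hae.mono ?_)
    intro ω hω hmem
    exact hpt ω hmem hω
  have h2 : (1:ENNReal) ≤ μ badUᶜ + μ badU := by
    rw [← measure_univ (μ := μ), ← Set.compl_union_self badU]
    exact measure_union_le _ _
  have h3 : ENNReal.ofReal (1-δ) ≤ μ badUᶜ := by
    have h4 : ENNReal.ofReal (1-δ) + ENNReal.ofReal δ ≤ μ badUᶜ + ENNReal.ofReal δ := by
      rw [← ENNReal.ofReal_add (by linarith) hδ0.le]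
      have h5 : ENNReal.ofReal (1 - δ + δ) = 1 := by norm_num
      rw [h5]
      exact le_trans h2 (add_le_add_right hbadU _)
    exact (ENNReal.add_le_add_iff_right ENNReal.ofReal_ne_top).mp h4
  exact le_trans h3 hfinal
end

section
/- Let S ⊆ ℝ^d be a nonempty closed convex set of diameter at most R > 0, let Ḡ > 0, T ≥ 1, and let f_1, …, f_T : ℝ^d → ℝ be convex, differentiable functions that are G-Lipschitz on S. Let Π_S denote the Euclidean projection onto S (the map sending each point to its unique nearest point of S). Define the projected online gradient descent iterates by x_1 ∈ S arbitrary and x_{t+1} = Π_S[x_t − η ∇f_t(x_t)] with step size η = R / (Ḡ √T). Then for every x ∈ S and every 1 ≤ τ ≤ T: Σ_{t=1}^{τ} (f_t(x_t) − f_t(x)) ≤ (1/2) R (Ḡ + G² Ḡ^{−1}) √T. -/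
open scoped BigOperators
open scoped RealInnerProductSpace

set_option maxHeartbeats 800000

noncomputable section

section Helpers

variable {E : Type*} [NormedAddCommGroup E] [InnerProductSpace ℝ E]

/-- If `ψ` has derivative `c` at `0`, `ψ 0 = 0` and `ψ δ ≤ K δ` for small positive `δ`,
then `c ≤ K`. -/
private lemma slope_deriv_le {ψ : ℝ → ℝ} {c K : ℝ} (hψ : HasDerivAt ψ c 0)
    (h0 : ψ 0 = 0) (hb : ∀ δ : ℝ, 0 < δ → δ ≤ 1 → ψ δ ≤ K * δ) : c ≤ K := by
  have h : Filter.Tendsto (slope ψ 0) (nhdsWithin (0:ℝ) (Set.Ioi 0)) (nhds c) :=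
    (hasDerivAt_iff_tendsto_slope.1 hψ).mono_left
      (nhdsWithin_mono 0 fun y hy => ne_of_gt hy)
  refine le_of_tendsto h ?_
  filter_upwards [Ioc_mem_nhdsGT_of_mem (Set.left_mem_Ico.mpr one_pos)] with δ hδ
  rw [slope_def_field, div_le_iff₀ (by simpa using hδ.1)]
  simpa [h0] using hb δ hδ.1 hδ.2

private lemma hasDerivAt_line [CompleteSpace E] {f : E → ℝ} {g x : E}
    (hf : HasGradientAt f g x) (d : E) :
    HasDerivAt (fun δ : ℝ => f (x + δ • d)) (⟪g, d⟫) 0 := by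
  have hline : HasDerivAt (fun δ : ℝ => x + δ • d) d 0 := by
    simpa using ((hasDerivAt_id (0:ℝ)).smul_const d).const_add x
  have hF : HasFDerivAt f (InnerProductSpace.toDual ℝ E g) ((fun δ : ℝ => x + δ • d) 0) := by
    simpa using hf.hasFDerivAt
  have := hF.comp_hasDerivAt (0:ℝ) hline
  simpa [Function.comp_def, InnerProductSpace.toDual_apply_apply] using this

private lemma grad_convex_ineq [CompleteSpace E] {f : E → ℝ}
    (hconv : ConvexOn ℝ Set.univ f) {g x : E} (hf : HasGradientAt f g x) (z : E) :
    f x - f z ≤ ⟪g, x - z⟫ := by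
  have hd : HasDerivAt (fun δ : ℝ => f (x + δ • (z - x)) - f x) (⟪g, z - x⟫) 0 :=
    (hasDerivAt_line hf (z - x)).sub_const (f x)
  have hb : ∀ δ : ℝ, 0 < δ → δ ≤ 1 → f (x + δ • (z - x)) - f x ≤ (f z - f x) * δ := by
    intro δ h0 h1
    have hc := hconv.2 (Set.mem_univ x) (Set.mem_univ z)
      (by linarith : (0:ℝ) ≤ 1 - δ) h0.le (by ring)
    have hxz : x + δ • (z - x) = (1 - δ) • x + δ • z := by
      rw [smul_sub]; module
    simp only [smul_eq_mul] at hc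
    rw [hxz]; nlinarith [hc]
  have h1 : ⟪g, z - x⟫ ≤ f z - f x := slope_deriv_le hd (by simp) hb
  have h2 : ⟪g, x - z⟫ = - ⟪g, z - x⟫ := by
    rw [← inner_neg_right]; congr 1; abel
  linarith [h1, h2.ge, h2.le]

/-- Key lemma: the projection of the gradient onto the direction space of the affine span of `S`
has norm at most the Lipschitz constant of `f` on `S`. -/
private lemma proj_grad_norm_le [FiniteDimensional ℝ E] {S : Set E}
    (hconv : Convex ℝ S) {f : E → ℝ} {G : ℝ} (hG : 0 ≤ G)
    (hlip : ∀ a ∈ S, ∀ b ∈ S, |f a - f b| ≤ G * ‖a - b‖)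
    {x : E} (hx : x ∈ S) {g : E} (hf : HasGradientAt f g x) :
    ‖((Submodule.orthogonalProjection (affineSpan ℝ S).direction g) : E)‖ ≤ G := by
  set V := (affineSpan ℝ S).direction with hV
  set g' : E := (Submodule.orthogonalProjection V g : E) with hg'def
  rcases eq_or_ne g' 0 with h0 | h0
  · rw [h0]; simpa using hG
  have hng' : (0:ℝ) < ‖g'‖ := norm_pos_iff.mpr h0
  set v : E := ‖g'‖⁻¹ • g' with hvdef
  have hg'mem : g' ∈ V := by rw [hg'def]; exact SetLike.coe_mem _
  have hvV : v ∈ V := V.smul_mem _ hg'mem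
  have hvnorm : ‖v‖ = 1 := by
    rw [hvdef, norm_smul, Real.norm_eq_abs, abs_of_nonneg (inv_nonneg.mpr (norm_nonneg g')),
      inv_mul_cancel₀ hng'.ne']
  have horth : g - g' ∈ Vᗮ := Submodule.sub_starProjection_mem_orthogonal (K := V) g
  have hgv : ⟪g, v⟫ = ‖g'‖ := by
    have h1 : ⟪g - g', v⟫ = 0 := (Submodule.mem_orthogonal' V _).1 horth v hvV
    have h2 : ⟪g', v⟫ = ‖g'‖ := by
      rw [hvdef, real_inner_smul_right, real_inner_self_eq_norm_sq]
      field_simp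
    have h3 : ⟪g - g', v⟫ = ⟪g, v⟫ - ⟪g', v⟫ := inner_sub_left g g' v
    linarith
  -- an intrinsic interior point
  obtain ⟨w, hw⟩ := (Set.nonempty_of_mem hx).intrinsicInterior hconv
  obtain ⟨w', hw'int, rfl⟩ := hw
  obtain ⟨ε, hε, hball⟩ := Metric.mem_nhds_iff.1 (mem_interior_iff_mem_nhds.1 hw'int)
  have hptS : ∀ s : ℝ, |s| < ε → (w' : E) + s • v ∈ S := by
    intro s hs
    have hmem : (w' : E) + s • v ∈ affineSpan ℝ S := by
      have := AffineSubspace.vadd_mem_of_mem_direction (V.smul_mem s hvV) w'.2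
      simpa [add_comm] using this
    have hb : (⟨(w' : E) + s • v, hmem⟩ : affineSpan ℝ S) ∈ Metric.ball w' ε := by
      rw [Metric.mem_ball, Subtype.dist_eq, dist_eq_norm]
      simpa [norm_smul, hvnorm] using hs
    exact hball hb
  set ρ : ℝ := ε / 2 with hρdef
  have hρ : 0 < ρ := by positivity
  have hq₁ : (w' : E) + ρ • v ∈ S := hptS ρ (by rw [abs_of_pos hρ]; linarith)
  have hq₂ : (w' : E) + (-ρ) • v ∈ S := hptS (-ρ) (by rw [abs_neg, abs_of_pos hρ]; linarith)
  set d₁ : E := ((w' : E) + ρ • v) - x with hd₁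
  set d₂ : E := ((w' : E) + (-ρ) • v) - x with hd₂
  have hφ : HasDerivAt (fun δ : ℝ => f (x + δ • d₁) - f (x + δ • d₂))
      (⟪g, d₁⟫ - ⟪g, d₂⟫) 0 := (hasDerivAt_line hf d₁).sub (hasDerivAt_line hf d₂)
  have hder : ⟪g, d₁⟫ - ⟪g, d₂⟫ = 2 * ρ * ‖g'‖ := by
    have hdd : d₁ - d₂ = (2 * ρ) • v := by rw [hd₁, hd₂]; module
    have : ⟪g, d₁⟫ - ⟪g, d₂⟫ = ⟪g, d₁ - d₂⟫ := (inner_sub_right g d₁ d₂).symm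
    rw [this, hdd, real_inner_smul_right, hgv]
  rw [hder] at hφ
  have hbound : ∀ δ : ℝ, 0 < δ → δ ≤ 1 →
      f (x + δ • d₁) - f (x + δ • d₂) ≤ (2 * ρ * G) * δ := by
    intro δ h0 h1
    have hp : x + δ • d₁ ∈ S := by
      have := hconv hx hq₁ (by linarith : (0:ℝ) ≤ 1 - δ) h0.le (by ring)
      have he : x + δ • d₁ = (1 - δ) • x + δ • ((w' : E) + ρ • v) := by
        rw [hd₁]; module
      rw [he]; exact this
    have hm : x + δ • d₂ ∈ S := by
      have := hconv hx hq₂ (by linarith : (0:ℝ) ≤ 1 - δ) h0.le (by ring)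
      have he : x + δ • d₂ = (1 - δ) • x + δ • ((w' : E) + (-ρ) • v) := by
        rw [hd₂]; module
      rw [he]; exact this
    have hl := hlip _ hp _ hm
    have hdiff : (x + δ • d₁) - (x + δ • d₂) = (δ * (2 * ρ)) • v := by
      rw [hd₁, hd₂]; module
    have hnd : ‖(x + δ • d₁) - (x + δ • d₂)‖ = δ * (2 * ρ) := by
      rw [hdiff, norm_smul, Real.norm_eq_abs, hvnorm, mul_one,
        abs_of_pos (by positivity : (0:ℝ) < δ * (2 * ρ))]
    calc f (x + δ • d₁) - f (x + δ • d₂) ≤ |f (x + δ • d₁) - f (x + δ • d₂)| := le_abs_self _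
      _ ≤ G * ‖(x + δ • d₁) - (x + δ • d₂)‖ := hl
      _ = (2 * ρ * G) * δ := by rw [hnd]; ring
  have hfin : 2 * ρ * ‖g'‖ ≤ 2 * ρ * G := slope_deriv_le hφ (by simp) hbound
  nlinarith [hfin, hρ]

private lemma obtuse_of_min {S : Set E} (hconv : Convex ℝ S) {u p : E} (hp : p ∈ S)
    (hmin : ∀ y ∈ S, ‖u - p‖ ≤ ‖u - y‖) {z : E} (hz : z ∈ S) :
    ⟪u - p, z - p⟫ ≤ 0 := by
  haveI : Nonempty S := ⟨⟨p, hp⟩⟩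
  have hiInf : ‖u - p‖ = ⨅ w : S, ‖u - w‖ :=
    le_antisymm (le_ciInf fun w => hmin w w.2)
      (ciInf_le (f := fun w : S => ‖u - w‖) ⟨0, by rintro _ ⟨w, rfl⟩; exact norm_nonneg _⟩ ⟨p, hp⟩)
  exact (norm_eq_iInf_iff_real_inner_le_zero hconv hp).1 hiInf z hz

private lemma sum_Icc_telescope (c : ℕ → ℝ) : ∀ τ : ℕ, 1 ≤ τ →
    ∑ t ∈ Finset.Icc 1 τ, (c t - c (t + 1)) = c 1 - c (τ + 1)
  | 0, h => absurd h (by omega)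
  | 1, _ => by simp
  | (n + 2), _ => by
    rw [Finset.sum_Icc_succ_top (by omega : 1 ≤ n + 2),
      sum_Icc_telescope c (n + 1) (by omega)]
    ring

end Helpers

/-- Anytime regret bound for projected online gradient descent with
step size `η = R/(Ḡ √T)` on convex `G`-Lipschitz losses over a closed convex set of
diameter at most `R`: for every comparator `x ∈ S` and every `1 ≤ τ ≤ T`,
`∑_{t=1}^τ (f_t(x_t) − f_t(x)) ≤ (1/2) R (Ḡ + G² Ḡ⁻¹) √T`. -/
theorem ogd_regret_bound (d T : ℕ) (hd : 1 ≤ d) (hT : 1 ≤ T)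
    (R G Gbar : ℝ) (hR : 0 < R) (hGbar : 0 < Gbar)
    (S : Set (EuclideanSpace ℝ (Fin d))) (hSne : S.Nonempty) (hScl : IsClosed S)
    (hSconv : Convex ℝ S) (hSdiam : ∀ x ∈ S, ∀ y ∈ S, ‖x - y‖ ≤ R)
    (f : ℕ → EuclideanSpace ℝ (Fin d) → ℝ)
    (hfconv : ∀ t ∈ Finset.Icc 1 T, ConvexOn ℝ Set.univ (f t))
    (hfdiff : ∀ t ∈ Finset.Icc 1 T, Differentiable ℝ (f t))
    (hflip : ∀ t ∈ Finset.Icc 1 T, ∀ x ∈ S, ∀ y ∈ S, |f t x - f t y| ≤ G * ‖x - y‖)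
    (proj : EuclideanSpace ℝ (Fin d) → EuclideanSpace ℝ (Fin d))
    (hproj : ∀ x, proj x ∈ S ∧ ∀ y ∈ S, ‖x - proj x‖ ≤ ‖x - y‖)
    (η : ℝ) (hη : η = R / (Gbar * Real.sqrt T))
    (x : ℕ → EuclideanSpace ℝ (Fin d)) (hx1 : x 1 ∈ S)
    (hxrec : ∀ t ∈ Finset.Icc 1 T, x (t + 1) = proj (x t - η • gradient (f t) (x t))) :
    ∀ z ∈ S, ∀ τ ∈ Finset.Icc 1 T,
      ∑ t ∈ Finset.Icc 1 τ, (f t (x t) - f t z) ≤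
        (1 / 2) * R * (Gbar + G ^ 2 * Gbar⁻¹) * Real.sqrt T := by
  intro z hz τ hτ
  rw [Finset.mem_Icc] at hτ
  obtain ⟨hτ1, hτT⟩ := hτ
  haveI : Nonempty S := hSne.to_subtype
  set G' : ℝ := |G| with hG'def
  have hG0 : (0:ℝ) ≤ G' := abs_nonneg G
  have hflip' : ∀ t ∈ Finset.Icc 1 T, ∀ a ∈ S, ∀ b ∈ S, |f t a - f t b| ≤ G' * ‖a - b‖ :=
    fun t ht a ha b hb => (hflip t ht a ha b hb).trans
      (mul_le_mul_of_nonneg_right (le_abs_self G) (norm_nonneg _))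
  have hsT : 0 < Real.sqrt T := Real.sqrt_pos.mpr (by exact_mod_cast hT)
  have hηpos : 0 < η := by rw [hη]; positivity
  -- all iterates stay in `S`
  have hmem : ∀ t : ℕ, 1 ≤ t → t ≤ T + 1 → x t ∈ S := by
    intro t
    induction t with
    | zero => intro h _; exact absurd h (by omega)
    | succ s _ =>
      intro _ h2
      rcases Nat.eq_zero_or_pos s with rfl | hs
      · exact hx1
      · rw [hxrec s (Finset.mem_Icc.mpr ⟨hs, by omega⟩)]
        exact (hproj _).1
  -- the per-step inequality
  have hstep : ∀ t, 1 ≤ t → t ≤ τ →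
      2 * η * (f t (x t) - f t z) ≤
        ‖x t - z‖ ^ 2 - ‖x (t + 1) - z‖ ^ 2 + η ^ 2 * G' ^ 2 := by
    intro t ht1 htτ
    have htT : t ≤ T := le_trans htτ hτT
    have htI : t ∈ Finset.Icc 1 T := Finset.mem_Icc.mpr ⟨ht1, htT⟩
    have hxt : x t ∈ S := hmem t ht1 (by omega)
    have hxt1 : x (t + 1) ∈ S := hmem (t + 1) (by omega) (by omega)
    set g : EuclideanSpace ℝ (Fin d) := gradient (f t) (x t) with hgdef
    have hgrad : HasGradientAt (f t) g (x t) := ((hfdiff t htI) (x t)).hasGradientAt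
    set V := (affineSpan ℝ S).direction with hV
    set g' : EuclideanSpace ℝ (Fin d) := (Submodule.orthogonalProjection V g : EuclideanSpace ℝ (Fin d))
      with hg'def
    have hg'mem : g' ∈ V := by rw [hg'def]; exact SetLike.coe_mem _
    have hg'norm : ‖g'‖ ≤ G' :=
      proj_grad_norm_le hSconv hG0 (hflip' t htI) hxt hgrad
    have horth : g - g' ∈ Vᗮ := Submodule.sub_starProjection_mem_orthogonal (K := V) g
    have hdirS : ∀ a ∈ S, ∀ b ∈ S, a - b ∈ V := fun a ha b hb => by
      simpa using AffineSubspace.vsub_mem_direction (subset_affineSpan ℝ S ha)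
        (subset_affineSpan ℝ S hb)
    set p : EuclideanSpace ℝ (Fin d) := x (t + 1) with hpdef
    have hpeq : p = proj (x t - η • g) := hxrec t htI
    set u' : EuclideanSpace ℝ (Fin d) := x t - η • g' with hu'def
    -- `p` minimizes the distance to `u'` over `S`
    have hkey : ∀ y ∈ S, ‖(x t - η • g) - y‖ ^ 2 = ‖u' - y‖ ^ 2 + ‖η • (g - g')‖ ^ 2 := by
      intro y hy
      have hmemV : u' - y ∈ V := by
        have h1 : x t - y ∈ V := hdirS _ hxt _ hy
        have h2 : η • g' ∈ V := V.smul_mem _ hg'mem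
        have he : u' - y = (x t - y) - η • g' := by rw [hu'def]; module
        rw [he]; exact V.sub_mem h1 h2
      have hperp : η • (g - g') ∈ Vᗮ := Submodule.smul_mem _ _ horth
      have hinner0 : ⟪u' - y, η • (g - g')⟫ = 0 :=
        Submodule.inner_right_of_mem_orthogonal hmemV hperp
      have heq : (x t - η • g) - y = (u' - y) - η • (g - g') := by rw [hu'def]; module
      rw [heq, norm_sub_sq_real, hinner0]; ring
    have hmin : ∀ y ∈ S, ‖u' - p‖ ≤ ‖u' - y‖ := by
      intro y hy
      have h1 : ‖(x t - η • g) - p‖ ≤ ‖(x t - η • g) - y‖ := by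
        rw [hpeq]; exact (hproj (x t - η • g)).2 y hy
      have h2 : ‖(x t - η • g) - p‖ ^ 2 ≤ ‖(x t - η • g) - y‖ ^ 2 :=
        pow_le_pow_left₀ (norm_nonneg _) h1 2
      have h3 := hkey p hxt1
      have h4 := hkey y hy
      have h5 : ‖u' - p‖ ^ 2 ≤ ‖u' - y‖ ^ 2 := by linarith
      exact (pow_le_pow_iff_left₀ (norm_nonneg _) (norm_nonneg _) two_ne_zero).1 h5
    have hobtuse : ⟪u' - p, z - p⟫ ≤ 0 := obtuse_of_min hSconv hxt1 hmin hz
    -- contraction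
    have hcontr : ‖p - z‖ ^ 2 ≤ ‖u' - z‖ ^ 2 := by
      have he : u' - z = (u' - p) + (p - z) := by abel
      have hexp : ‖u' - z‖ ^ 2 = ‖u' - p‖ ^ 2 + 2 * ⟪u' - p, p - z⟫ + ‖p - z‖ ^ 2 := by
        rw [he, norm_add_sq_real]
      have hx0 : ⟪u' - p, p - z⟫ = - ⟪u' - p, z - p⟫ := by
        rw [← inner_neg_right]; congr 1; abel
      nlinarith [sq_nonneg ‖u' - p‖]
    -- expansion
    have hexp2 : ‖u' - z‖ ^ 2 = ‖x t - z‖ ^ 2 - 2 * η * ⟪g', x t - z⟫ + η ^ 2 * ‖g'‖ ^ 2 := by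
      have he : u' - z = (x t - z) - η • g' := by rw [hu'def]; module
      rw [he, norm_sub_sq_real, real_inner_smul_right, norm_smul, Real.norm_eq_abs,
        real_inner_comm, mul_pow, sq_abs]
      ring
    -- inner product equality
    have hieq : ⟪g, x t - z⟫ = ⟪g', x t - z⟫ := by
      have h0 : ⟪g - g', x t - z⟫ = 0 :=
        (Submodule.mem_orthogonal' V _).1 horth _ (hdirS _ hxt _ hz)
      have h1 : ⟪g - g', x t - z⟫ = ⟪g, x t - z⟫ - ⟪g', x t - z⟫ := inner_sub_left _ _ _
      linarith
    have hcvx : f t (x t) - f t z ≤ ⟪g, x t - z⟫ := grad_convex_ineq (hfconv t htI) hgrad z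
    have hg'sq : ‖g'‖ ^ 2 ≤ G' ^ 2 := pow_le_pow_left₀ (norm_nonneg _) hg'norm 2
    have hA : 2 * η * (f t (x t) - f t z) ≤ 2 * η * ⟪g', x t - z⟫ := by
      rw [hieq] at hcvx
      exact mul_le_mul_of_nonneg_left hcvx (by positivity)
    have hB : (0:ℝ) ≤ η ^ 2 * (G' ^ 2 - ‖g'‖ ^ 2) := mul_nonneg (sq_nonneg η) (by linarith)
    have : ‖x (t+1) - z‖ ^ 2 = ‖p - z‖ ^ 2 := by rw [hpdef]
    nlinarith [hcontr, hexp2, hA, hB]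
  -- sum up
  have hsum : 2 * η * (∑ t ∈ Finset.Icc 1 τ, (f t (x t) - f t z)) ≤
      ∑ t ∈ Finset.Icc 1 τ, (‖x t - z‖ ^ 2 - ‖x (t + 1) - z‖ ^ 2 + η ^ 2 * G' ^ 2) := by
    rw [Finset.mul_sum]
    exact Finset.sum_le_sum fun t ht =>
      hstep t (Finset.mem_Icc.1 ht).1 (Finset.mem_Icc.1 ht).2
  have htel : ∑ t ∈ Finset.Icc 1 τ, (‖x t - z‖ ^ 2 - ‖x (t + 1) - z‖ ^ 2) =
      ‖x 1 - z‖ ^ 2 - ‖x (τ + 1) - z‖ ^ 2 :=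
    sum_Icc_telescope (fun t => ‖x t - z‖ ^ 2) τ hτ1
  have hsum2 : ∑ t ∈ Finset.Icc 1 τ, (‖x t - z‖ ^ 2 - ‖x (t + 1) - z‖ ^ 2 + η ^ 2 * G' ^ 2) =
      (‖x 1 - z‖ ^ 2 - ‖x (τ + 1) - z‖ ^ 2) + (τ : ℝ) * (η ^ 2 * G' ^ 2) := by
    rw [Finset.sum_add_distrib, htel, Finset.sum_const, Nat.card_Icc]
    simp [nsmul_eq_mul]
  have hc1 : ‖x 1 - z‖ ^ 2 ≤ R ^ 2 := pow_le_pow_left₀ (norm_nonneg _) (hSdiam _ hx1 _ hz) 2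
  have hτle : (τ : ℝ) ≤ (T : ℝ) := Nat.cast_le.mpr hτT
  have hfin : 2 * η * (∑ t ∈ Finset.Icc 1 τ, (f t (x t) - f t z)) ≤
      R ^ 2 + (T : ℝ) * (η ^ 2 * G' ^ 2) := by
    have h0 : (0:ℝ) ≤ ‖x (τ + 1) - z‖ ^ 2 := sq_nonneg _
    have hmono : (τ : ℝ) * (η ^ 2 * G' ^ 2) ≤ (T : ℝ) * (η ^ 2 * G' ^ 2) :=
      mul_le_mul_of_nonneg_right hτle (by positivity)
    rw [hsum2] at hsum
    linarith
  -- final algebra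
  have hs2 : Real.sqrt T * Real.sqrt T = (T : ℝ) := Real.mul_self_sqrt (Nat.cast_nonneg T)
  rw [← hs2] at hfin
  have hG2 : G ^ 2 = G' ^ 2 := (sq_abs G).symm
  rw [hG2]
  generalize hsdef : Real.sqrt (T : ℝ) = s at hfin hsT hη ⊢
  have hRHS : (1 / 2) * R * (Gbar + G' ^ 2 * Gbar⁻¹) * s =
      (R ^ 2 + (s * s) * (η ^ 2 * G' ^ 2)) / (2 * η) := by
    rw [hη]
    field_simp
  rw [hRHS, le_div_iff₀ (by positivity : (0:ℝ) < 2 * η)]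
  linarith [hfin]
end
end

section
/- Let H ≥ 1, d_x, d_u ≥ 1, R_𝓜 ≥ 1, 0 < W ≤ R_𝓜, and let t be an integer. For each s ∈ {t−H, …, t} let M_s ∈ ℝ^{d_u × H d_x} with blocks M_s^{[h]} ∈ ℝ^{d_u × d_x} satisfy ‖M_s‖_F ≤ R_𝓜. Let w_r, ŵ_r ∈ ℝ^{d_x} for r ∈ {t−2H, …, t−2} with ‖ŵ_r‖ ≤ W. Define u_{t−h} = Σ_{h'=1}^{H} M_{t−h}^{[h']} ŵ_{t−h−h'} and u'_{t−h} = Σ_{h'=1}^{H} M_t^{[h']} w_{t−h−h'} for h ∈ {1,…,H}. Then Σ_{h=1}^{H} ‖u_{t−h} − u'_{t−h}‖² + Σ_{h=2}^{H} ‖ŵ_{t−h} − w_{t−h}‖² ≤ 2 R_𝓜² H [ Σ_{h=2}^{2H} ‖w_{t−h} − ŵ_{t−h}‖² + Σ_{h=1}^{H} ‖M_{t−h} − M_t‖_F² ]. -/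
open scoped BigOperators

noncomputable def eN {d : ℕ} (v : Fin d → ℝ) : ℝ := ‖(WithLp.equiv 2 (Fin d → ℝ)).symm v‖

lemma eN_nonneg {d : ℕ} (v : Fin d → ℝ) : 0 ≤ eN v := norm_nonneg _

lemma eN_sq {d : ℕ} (v : Fin d → ℝ) : eN v ^ 2 = ∑ i, v i ^ 2 := by
  rw [eN, EuclideanSpace.norm_eq, Real.sq_sqrt (by positivity)]
  simp [Real.norm_eq_abs, sq_abs]

lemma eN_sum_le {d : ℕ} {ι : Type*} (s : Finset ι) (f : ι → Fin d → ℝ) :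
    eN (∑ h ∈ s, f h) ≤ ∑ h ∈ s, eN (f h) := by
  have : (WithLp.equiv 2 (Fin d → ℝ)).symm (∑ h ∈ s, f h)
      = ∑ h ∈ s, (WithLp.equiv 2 (Fin d → ℝ)).symm (f h) := by exact WithLp.toLp_sum 2 (Fin d → ℝ) s f
  rw [eN, this]
  exact norm_sum_le s _

lemma mulVec_sq_le {d e : ℕ} (A : Matrix (Fin e) (Fin d) ℝ) (v : Fin d → ℝ) :
    ∑ i, (A.mulVec v i) ^ 2 ≤ (∑ i, ∑ j, A i j ^ 2) * ∑ j, v j ^ 2 := by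
  have h1 : ∀ i : Fin e, (A.mulVec v i) ^ 2 ≤ (∑ j, A i j ^ 2) * ∑ j, v j ^ 2 := by
    intro i
    have : A.mulVec v i = ∑ j, A i j * v j := by
      simp [Matrix.mulVec, dotProduct]
    rw [this]
    exact Finset.sum_mul_sq_le_sq_mul_sq _ _ _
  calc ∑ i, (A.mulVec v i) ^ 2 ≤ ∑ i, ((∑ j, A i j ^ 2) * ∑ j, v j ^ 2) :=
        Finset.sum_le_sum fun i _ => h1 i
    _ = (∑ i, ∑ j, A i j ^ 2) * ∑ j, v j ^ 2 := by rw [← Finset.sum_mul]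

lemma count_lemma (H : ℕ) (hH : 1 ≤ H) (a : ℕ → ℝ) (ha : ∀ k, 0 ≤ a k) :
    (∑ h ∈ Finset.Icc 1 H, ∑ h' ∈ Finset.Icc 1 H, a (h + h')) +
      ∑ k ∈ Finset.Icc 2 H, a k ≤ H * ∑ k ∈ Finset.Icc 2 (2 * H), a k := by
  have key : ∀ h ∈ Finset.Icc 1 H,
      (∑ h' ∈ Finset.Icc 1 H, a (h + h')) + ∑ k ∈ Finset.Icc 2 h, a k ≤
        ∑ k ∈ Finset.Icc 2 (2 * H), a k := by
    intro h hh
    rw [Finset.mem_Icc] at hh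
    have e1 : (∑ h' ∈ Finset.Icc 1 H, a (h + h')) = ∑ k ∈ Finset.Icc (h + 1) (h + H), a k := by
      rw [← Finset.map_add_left_Icc 1 H h, Finset.sum_map]
      simp [addLeftEmbedding_apply]
    rw [e1]
    have hdisj : Disjoint (Finset.Icc (h + 1) (h + H)) (Finset.Icc 2 h) := by
      rw [Finset.disjoint_left]
      intro k hk1 hk2
      rw [Finset.mem_Icc] at hk1 hk2
      omega
    rw [← Finset.sum_union hdisj]
    apply Finset.sum_le_sum_of_subset_of_nonneg
    · intro k hk
      rw [Finset.mem_union, Finset.mem_Icc, Finset.mem_Icc] at hk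
      rw [Finset.mem_Icc]
      omega
    · intro k _ _; exact ha k
  have h2 : ∑ h ∈ Finset.Icc 1 H,
      ((∑ h' ∈ Finset.Icc 1 H, a (h + h')) + ∑ k ∈ Finset.Icc 2 h, a k) ≤
      (H : ℝ) * ∑ k ∈ Finset.Icc 2 (2 * H), a k := by
    calc _ ≤ ∑ _h ∈ Finset.Icc 1 H, ∑ k ∈ Finset.Icc 2 (2 * H), a k :=
          Finset.sum_le_sum key
      _ = (H : ℝ) * ∑ k ∈ Finset.Icc 2 (2 * H), a k := by
          rw [Finset.sum_const, Nat.card_Icc]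
          simp [nsmul_eq_mul]
  rw [Finset.sum_add_distrib] at h2
  have h3 : ∑ k ∈ Finset.Icc 2 H, a k ≤
      ∑ h ∈ Finset.Icc 1 H, ∑ k ∈ Finset.Icc 2 h, a k := by
    apply Finset.single_le_sum (f := fun h => ∑ k ∈ Finset.Icc 2 h, a k)
    · intro h _; exact Finset.sum_nonneg fun k _ => ha k
    · rw [Finset.mem_Icc]; omega
  linarith

set_option maxHeartbeats 1600000 in
/-- Sensitivity of the DAP observation vector to the disturbances and
to the policy parameters: with `u_{t−h} = ∑_{h'} M_{t−h}^{[h']} ŵ_{t−h−h'}` and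
`u'_{t−h} = ∑_{h'} M_t^{[h']} w_{t−h−h'}`,
`∑_{h=1}^H ‖u_{t−h} − u'_{t−h}‖² + ∑_{h=2}^H ‖ŵ_{t−h} − w_{t−h}‖²
  ≤ 2 R_𝓜² H (∑_{h=2}^{2H} ‖w_{t−h} − ŵ_{t−h}‖² + ∑_{h=1}^H ‖M_{t−h} − M_t‖_F²)`. -/
theorem dap_observation_sensitivity (H dx du : ℕ) (hH : 1 ≤ H) (hdx : 1 ≤ dx) (hdu : 1 ≤ du)
    (W RM : ℝ) (hW : 0 < W) (hWRM : W ≤ RM) (hRM : 1 ≤ RM) (t : ℤ)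
    (M : ℤ → ℕ → Matrix (Fin du) (Fin dx) ℝ)
    (hM : ∀ s ∈ Finset.Icc (t - H) t,
      Real.sqrt (∑ h ∈ Finset.Icc 1 H, ∑ i, ∑ j, (M s h i j) ^ 2) ≤ RM)
    (w what : ℤ → Fin dx → ℝ)
    (hwhat : ∀ r ∈ Finset.Icc (t - 2 * H) (t - 2), Real.sqrt (∑ i, (what r i) ^ 2) ≤ W)
    (u u' : ℤ → Fin du → ℝ)
    (hu : ∀ h ∈ Finset.Icc 1 H,
      u (t - h) = ∑ h' ∈ Finset.Icc 1 H, (M (t - h) h').mulVec (what (t - h - h')))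
    (hu' : ∀ h ∈ Finset.Icc 1 H,
      u' (t - h) = ∑ h' ∈ Finset.Icc 1 H, (M t h').mulVec (w (t - h - h'))) :
    (∑ h ∈ Finset.Icc 1 H, ∑ i, (u (t - h) i - u' (t - h) i) ^ 2) +
        (∑ h ∈ Finset.Icc 2 H, ∑ i, (what (t - h) i - w (t - h) i) ^ 2) ≤
      2 * RM ^ 2 * H *
        ((∑ h ∈ Finset.Icc 2 (2 * H), ∑ i, (w (t - h) i - what (t - h) i) ^ 2) +
          ∑ h ∈ Finset.Icc 1 H, ∑ h' ∈ Finset.Icc 1 H, ∑ i, ∑ j,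
            (M (t - h) h' i j - M t h' i j) ^ 2) := by
  classical
  set a : ℕ → ℝ := fun k => ∑ i, (w (t - k) i - what (t - k) i) ^ 2 with ha_def
  set mm : ℕ → ℕ → ℝ := fun h h' => ∑ i, ∑ j, (M (t - h) h' i j - M t h' i j) ^ 2 with hmm_def
  have ha0 : ∀ k, 0 ≤ a k := fun k => Finset.sum_nonneg fun i _ => sq_nonneg _
  have hmm0 : ∀ h h', 0 ≤ mm h h' := fun h h' =>
    Finset.sum_nonneg fun i _ => Finset.sum_nonneg fun j _ => sq_nonneg _
  -- bound on blocks of M t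
  set B : ℕ → ℝ := fun h' => ∑ i, ∑ j, (M t h' i j) ^ 2 with hB_def
  have hB0 : ∀ h', 0 ≤ B h' := fun h' =>
    Finset.sum_nonneg fun i _ => Finset.sum_nonneg fun j _ => sq_nonneg _
  have hBsum : ∑ h' ∈ Finset.Icc 1 H, B h' ≤ RM ^ 2 := by
    have ht : t ∈ Finset.Icc (t - (H : ℤ)) t := by
      rw [Finset.mem_Icc]
      constructor
      · omega
      · omega
    have h1 := hM t ht
    have h2 : 0 ≤ ∑ h' ∈ Finset.Icc 1 H, B h' :=
      Finset.sum_nonneg fun h' _ => hB0 h'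
    nlinarith [Real.sq_sqrt h2, Real.sqrt_nonneg (∑ h' ∈ Finset.Icc 1 H, B h')]
  -- bound on what
  have hwhat2 : ∀ h ∈ Finset.Icc 1 H, ∀ h' ∈ Finset.Icc 1 H,
      ∑ j, (what (t - h - h') j) ^ 2 ≤ W ^ 2 := by
    intro h hh h' hh'
    rw [Finset.mem_Icc] at hh hh'
    have hr : t - (h : ℤ) - (h' : ℤ) ∈ Finset.Icc (t - 2 * (H : ℤ)) (t - 2) := by
      rw [Finset.mem_Icc]
      omega
    have h1 := hwhat _ hr
    have h2 : 0 ≤ ∑ j, (what (t - h - h') j) ^ 2 :=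
      Finset.sum_nonneg fun j _ => sq_nonneg _
    nlinarith [Real.sq_sqrt h2, Real.sqrt_nonneg (∑ j, (what (t - h - h') j) ^ 2)]
  -- per-h bound
  have hD : ∀ h ∈ Finset.Icc 1 H,
      ∑ i, (u (t - h) i - u' (t - h) i) ^ 2 ≤
        2 * (W ^ 2 * H * ∑ h' ∈ Finset.Icc 1 H, mm h h') +
        2 * (RM ^ 2 * ∑ h' ∈ Finset.Icc 1 H, a (h + h')) := by
    intro h hh
    set xv : ℕ → Fin du → ℝ :=
      fun h' => (M (t - h) h' - M t h').mulVec (what (t - h - h')) with hxv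
    set yv : ℕ → Fin du → ℝ :=
      fun h' => (M t h').mulVec (what (t - h - h') - w (t - h - h')) with hyv
    set X : Fin du → ℝ := ∑ h' ∈ Finset.Icc 1 H, xv h' with hX_def
    set Y : Fin du → ℝ := ∑ h' ∈ Finset.Icc 1 H, yv h' with hY_def
    have hsplit : u (t - h) - u' (t - h) = X + Y := by
      rw [hu h hh, hu' h hh, hX_def, hY_def, ← Finset.sum_add_distrib,
        ← Finset.sum_sub_distrib]
      apply Finset.sum_congr rfl
      intro h' _
      rw [hxv, hyv]
      simp only [Matrix.sub_mulVec, Matrix.mulVec_sub]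
      abel
    have hfun : ∀ i, u (t - h) i - u' (t - h) i = X i + Y i := by
      intro i
      have := congrFun hsplit i
      simpa using this
    -- X part
    have hXb : ∑ i, X i ^ 2 ≤ W ^ 2 * H * ∑ h' ∈ Finset.Icc 1 H, mm h h' := by
      have step1 : ∀ i, X i ^ 2 ≤ (H : ℝ) * ∑ h' ∈ Finset.Icc 1 H, (xv h' i) ^ 2 := by
        intro i
        have hXi : X i = ∑ h' ∈ Finset.Icc 1 H, xv h' i := by
          rw [hX_def]; simp [Finset.sum_apply]
        rw [hXi]
        have := sq_sum_le_card_mul_sum_sq (s := Finset.Icc 1 H) (f := fun h' => xv h' i)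
        simpa [Nat.card_Icc] using this
      calc ∑ i, X i ^ 2 ≤ ∑ i, ((H : ℝ) * ∑ h' ∈ Finset.Icc 1 H, (xv h' i) ^ 2) :=
            Finset.sum_le_sum fun i _ => step1 i
        _ = (H : ℝ) * ∑ h' ∈ Finset.Icc 1 H, ∑ i, (xv h' i) ^ 2 := by
            rw [← Finset.mul_sum, Finset.sum_comm]
        _ ≤ (H : ℝ) * ∑ h' ∈ Finset.Icc 1 H, (mm h h' * W ^ 2) := by
            apply mul_le_mul_of_nonneg_left _ (by positivity)
            apply Finset.sum_le_sum
            intro h' hh'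
            have e1 : ∑ i, (xv h' i) ^ 2 ≤
                (∑ i, ∑ j, ((M (t - h) h' - M t h') i j) ^ 2) *
                  ∑ j, (what (t - h - h') j) ^ 2 := mulVec_sq_le _ _
            have e2 : (∑ i, ∑ j, ((M (t - h) h' - M t h') i j) ^ 2) = mm h h' := by
              rw [hmm_def]; simp [Matrix.sub_apply]
            rw [e2] at e1
            calc ∑ i, (xv h' i) ^ 2 ≤ mm h h' * ∑ j, (what (t - h - h') j) ^ 2 := e1
              _ ≤ mm h h' * W ^ 2 :=
                  mul_le_mul_of_nonneg_left (hwhat2 h hh h' hh') (hmm0 h h')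
        _ = W ^ 2 * H * ∑ h' ∈ Finset.Icc 1 H, mm h h' := by
            rw [← Finset.sum_mul]; ring
    -- Y part
    have hYb : ∑ i, Y i ^ 2 ≤ RM ^ 2 * ∑ h' ∈ Finset.Icc 1 H, a (h + h') := by
      have hasub : ∀ h' ∈ Finset.Icc 1 H,
          ∑ j, (what (t - h - h') j - w (t - h - h') j) ^ 2 = a (h + h') := by
        intro h' _
        have e : t - ((h + h' : ℕ) : ℤ) = t - h - h' := by push_cast; ring
        show _ = ∑ i, (w (t - ((h + h' : ℕ) : ℤ)) i - what (t - ((h + h' : ℕ) : ℤ)) i) ^ 2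
        rw [e]
        apply Finset.sum_congr rfl
        intro j _
        ring
      have step1 : ∀ h' ∈ Finset.Icc 1 H,
          eN (yv h') ≤ Real.sqrt (B h') * Real.sqrt (a (h + h')) := by
        intro h' hh'
        have e1 : eN (yv h') ^ 2 ≤ B h' * a (h + h') := by
          rw [eN_sq]
          have hb := mulVec_sq_le (M t h') (what (t - h - h') - w (t - h - h'))
          have e2 : ∑ j, ((what (t - h - h') - w (t - h - h')) j) ^ 2 = a (h + h') := by
            rw [← hasub h' hh']
            apply Finset.sum_congr rfl
            intro j _
            simp [Pi.sub_apply]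
          rw [e2] at hb
          exact hb
        calc eN (yv h') = Real.sqrt (eN (yv h') ^ 2) := (Real.sqrt_sq (eN_nonneg _)).symm
          _ ≤ Real.sqrt (B h' * a (h + h')) := Real.sqrt_le_sqrt e1
          _ = Real.sqrt (B h') * Real.sqrt (a (h + h')) := Real.sqrt_mul (hB0 h') _
      have step2 : eN Y ≤
          ∑ h' ∈ Finset.Icc 1 H, Real.sqrt (B h') * Real.sqrt (a (h + h')) := by
        rw [hY_def]
        exact le_trans (eN_sum_le _ _) (Finset.sum_le_sum step1)
      have step4 : eN Y ^ 2 ≤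
          (∑ h' ∈ Finset.Icc 1 H, Real.sqrt (B h') * Real.sqrt (a (h + h'))) ^ 2 :=
        pow_le_pow_left₀ (eN_nonneg _) step2 2
      have step5 : (∑ h' ∈ Finset.Icc 1 H, Real.sqrt (B h') * Real.sqrt (a (h + h'))) ^ 2 ≤
          (∑ h' ∈ Finset.Icc 1 H, B h') * ∑ h' ∈ Finset.Icc 1 H, a (h + h') := by
        have := Finset.sum_mul_sq_le_sq_mul_sq (Finset.Icc 1 H)
          (fun h' => Real.sqrt (B h')) (fun h' => Real.sqrt (a (h + h')))
        have e3 : ∑ h' ∈ Finset.Icc 1 H, Real.sqrt (B h') ^ 2 =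
            ∑ h' ∈ Finset.Icc 1 H, B h' :=
          Finset.sum_congr rfl fun h' _ => Real.sq_sqrt (hB0 h')
        have e4 : ∑ h' ∈ Finset.Icc 1 H, Real.sqrt (a (h + h')) ^ 2 =
            ∑ h' ∈ Finset.Icc 1 H, a (h + h') :=
          Finset.sum_congr rfl fun h' _ => Real.sq_sqrt (ha0 _)
        rw [e3, e4] at this
        exact this
      have step6 : (∑ h' ∈ Finset.Icc 1 H, B h') * (∑ h' ∈ Finset.Icc 1 H, a (h + h')) ≤
          RM ^ 2 * ∑ h' ∈ Finset.Icc 1 H, a (h + h') :=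
        mul_le_mul_of_nonneg_right hBsum (Finset.sum_nonneg fun h' _ => ha0 _)
      calc ∑ i, Y i ^ 2 = eN Y ^ 2 := (eN_sq Y).symm
        _ ≤ _ := le_trans step4 (le_trans step5 step6)
    -- combine
    calc ∑ i, (u (t - h) i - u' (t - h) i) ^ 2
        = ∑ i, (X i + Y i) ^ 2 := by
          apply Finset.sum_congr rfl; intro i _; rw [hfun i]
      _ ≤ ∑ i, (2 * X i ^ 2 + 2 * Y i ^ 2) := by
          apply Finset.sum_le_sum; intro i _; nlinarith [sq_nonneg (X i - Y i)]
      _ = 2 * ∑ i, X i ^ 2 + 2 * ∑ i, Y i ^ 2 := by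
          rw [Finset.sum_add_distrib, ← Finset.mul_sum, ← Finset.mul_sum]
      _ ≤ 2 * (W ^ 2 * H * ∑ h' ∈ Finset.Icc 1 H, mm h h') +
          2 * (RM ^ 2 * ∑ h' ∈ Finset.Icc 1 H, a (h + h')) := by
          have := hXb; have := hYb; linarith
  -- assemble
  have hL1 : ∑ h ∈ Finset.Icc 1 H, ∑ i, (u (t - h) i - u' (t - h) i) ^ 2 ≤
      2 * (W ^ 2 * H * ∑ h ∈ Finset.Icc 1 H, ∑ h' ∈ Finset.Icc 1 H, mm h h') +
      2 * (RM ^ 2 * ∑ h ∈ Finset.Icc 1 H, ∑ h' ∈ Finset.Icc 1 H, a (h + h')) := by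
    calc ∑ h ∈ Finset.Icc 1 H, ∑ i, (u (t - h) i - u' (t - h) i) ^ 2
        ≤ ∑ h ∈ Finset.Icc 1 H,
          (2 * (W ^ 2 * H * ∑ h' ∈ Finset.Icc 1 H, mm h h') +
            2 * (RM ^ 2 * ∑ h' ∈ Finset.Icc 1 H, a (h + h'))) := Finset.sum_le_sum hD
      _ = _ := by
          rw [Finset.sum_add_distrib, ← Finset.mul_sum, ← Finset.mul_sum,
            ← Finset.mul_sum, ← Finset.mul_sum]
  have hL2 : ∑ h ∈ Finset.Icc 2 H, ∑ i, (what (t - h) i - w (t - h) i) ^ 2 =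
      ∑ k ∈ Finset.Icc 2 H, a k :=
    Finset.sum_congr rfl fun k _ => Finset.sum_congr rfl fun i _ => by ring
  have count := count_lemma H hH a ha0
  set Smm := ∑ h ∈ Finset.Icc 1 H, ∑ h' ∈ Finset.Icc 1 H, mm h h' with hSmm
  set Sa2 := ∑ h ∈ Finset.Icc 1 H, ∑ h' ∈ Finset.Icc 1 H, a (h + h') with hSa2
  set SA := ∑ k ∈ Finset.Icc 2 H, a k with hSA
  set T := ∑ k ∈ Finset.Icc 2 (2 * H), a k with hT
  have hSmm0 : 0 ≤ Smm :=
    Finset.sum_nonneg fun h _ => Finset.sum_nonneg fun h' _ => hmm0 h h'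
  have hSA0 : 0 ≤ SA := Finset.sum_nonneg fun k _ => ha0 k
  have hT0 : 0 ≤ T := Finset.sum_nonneg fun k _ => ha0 k
  have hW2 : W ^ 2 ≤ RM ^ 2 := by nlinarith
  have hHr : (1 : ℝ) ≤ (H : ℝ) := by exact_mod_cast hH
  have k1 : 2 * (W ^ 2 * H * Smm) ≤ 2 * (RM ^ 2 * H * Smm) := by
    have p : 0 ≤ (RM ^ 2 - W ^ 2) * ((H : ℝ) * Smm) :=
      mul_nonneg (by linarith) (mul_nonneg (by positivity) hSmm0)
    nlinarith [p]
  have k2 : 2 * (RM ^ 2 * Sa2) + SA ≤ 2 * RM ^ 2 * ((H : ℝ) * T) := by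
    have p1 : 0 ≤ RM ^ 2 * ((H : ℝ) * T - Sa2 - SA) :=
      mul_nonneg (by positivity) (by linarith)
    have p2 : 0 ≤ (2 * RM ^ 2 - 1) * SA := mul_nonneg (by nlinarith) hSA0
    nlinarith [p1, p2]
  rw [hL2]
  linarith [hL1, k1, k2]
end

section
/- Let q, m, d_x, d_u ≥ 1, let c : ℝ^{d_x} × ℝ^{d_u} → ℝ be 1-Lipschitz with respect to the Euclidean norm on the concatenated pair, let P ∈ ℝ^{q×m}, Ψ, Ψ⋆ ∈ ℝ^{d_x×q}, write Δ = Ψ⋆ − Ψ, let V ∈ ℝ^{q×q} be positive definite, and let α ≥ 0. Let w be a random vector in ℝ^m with E‖w‖² < ∞ and second-moment matrix S = E[w wᵀ], and let ζ : ℝ^m → ℝ^{d_x} and U : ℝ^m → ℝ^{d_u} be measurable maps. Define f(w) = c(Ψ⋆ P w + ζ(w), U(w)) and f̄(w) = c(Ψ P w + ζ(w), U(w)) − α ‖V^{−1/2} P S^{1/2}‖_∞. Then: (i) E|c(Ψ P w + ζ(w), U(w)) − f(w)| ≤ ‖Δ V^{1/2}‖ · ‖V^{−1/2} P S^{1/2}‖_F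 ≤ √(q m) · ‖Δ V^{1/2}‖ · ‖V^{−1/2} P S^{1/2}‖_∞; consequently (ii) E[f̄(w) − f(w)] ≤ (√(q m) · ‖Δ V^{1/2}‖ − α) · ‖V^{−1/2} P S^{1/2}‖_∞ and (iii) E[f(w) − f̄(w)] ≤ (√(q m) · ‖Δ V^{1/2}‖ + α) · ‖V^{−1/2} P S^{1/2}‖_F. -/
open MeasureTheory
open scoped BigOperators

noncomputable section

/-- The Frobenius norm of a real matrix. -/
noncomputable def frobNorm {m n : Type*} [Fintype m] [Fintype n]
    (A : Matrix m n ℝ) : ℝ :=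
  Real.sqrt (∑ i, ∑ j, (A i j) ^ 2)

/-- The entrywise maximum absolute value of a real matrix. -/
noncomputable def entryMax {m n : Type*} [Fintype m] [Fintype n]
    (A : Matrix m n ℝ) : ℝ :=
  ⨆ i, ⨆ j, |A i j|

open Matrix
open scoped Matrix

lemma specNorm_nonneg {m n : Type*} [Fintype m] [Fintype n] [DecidableEq n]
    (A : Matrix m n ℝ) : 0 ≤ specNorm A := norm_nonneg _

lemma mulVec_norm_le {a b : Type*} [Fintype a] [Fintype b] [DecidableEq b]
    (A : Matrix a b ℝ) (v : b → ℝ) :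
    Real.sqrt (∑ i, (A.mulVec v i)^2) ≤ specNorm A * Real.sqrt (∑ j, (v j)^2) := by
  have h := (LinearMap.toContinuousLinearMap (Matrix.toEuclideanLin A)).le_opNorm
    ((WithLp.equiv 2 (b → ℝ)).symm v)
  simpa [specNorm, EuclideanSpace.norm_eq, Matrix.toEuclideanLin_apply,
    Real.norm_eq_abs, sq_abs] using h

lemma posDef_of_sq {n : Type*} [Fintype n] [DecidableEq n] {A : Matrix n n ℝ}
    (hA : A.PosSemidef) (h : (A*A).PosDef) : A.PosDef := by
  refine posDef_iff_dotProduct_mulVec.mpr ⟨hA.1, fun x hx => lt_of_le_of_ne (hA.dotProduct_mulVec_nonneg x) ?_⟩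
  intro heq
  have h0 : A *ᵥ x = 0 := (hA.dotProduct_mulVec_zero_iff x).mp heq.symm
  have h1 : star x ⬝ᵥ (A*A) *ᵥ x = 0 := by
    rw [← Matrix.mulVec_mulVec, h0, Matrix.mulVec_zero, dotProduct_zero]
  exact absurd h1.symm (ne_of_lt (h.dotProduct_mulVec_pos hx))

lemma jensen_sqrt {Ω : Type*} [MeasurableSpace Ω] (μ : Measure Ω) [IsProbabilityMeasure μ]
    (g : Ω → ℝ) (hg : ∀ ω, 0 ≤ g ω) (hgi : Integrable g μ)
    (hg2 : Integrable (fun ω => (g ω)^2) μ) :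
    ∫ ω, g ω ∂μ ≤ Real.sqrt (∫ ω, (g ω)^2 ∂μ) := by
  set I := ∫ ω, g ω ∂μ with hI
  have hI0 : 0 ≤ I := integral_nonneg hg
  have key : I^2 ≤ ∫ ω, (g ω)^2 ∂μ := by
    have h1 : 0 ≤ ∫ ω, (g ω - I)^2 ∂μ := integral_nonneg (fun ω => sq_nonneg _)
    have expand : ∫ ω, (g ω - I)^2 ∂μ = (∫ ω, (g ω)^2 ∂μ) - I^2 := by
      have hpt : (fun ω => (g ω - I)^2) = fun ω => ((g ω)^2 - (2*I) * g ω) + I^2 := by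
        funext ω; ring
      have ha : Integrable (fun ω => (g ω)^2 - (2*I) * g ω) μ := hg2.sub (hgi.const_mul (2*I))
      rw [hpt, integral_add ha (integrable_const (I^2)),
        integral_sub hg2 (hgi.const_mul (2*I)), integral_const_mul, integral_const]
      simp [← hI]; ring
    linarith
  calc I = Real.sqrt (I^2) := (Real.sqrt_sq hI0).symm
  _ ≤ _ := Real.sqrt_le_sqrt key

lemma sqrt_le_one_add {t : ℝ} (ht : 0 ≤ t) : Real.sqrt t ≤ 1 + t := by
  nlinarith [Real.sq_sqrt ht, Real.sqrt_nonneg t, sq_nonneg (Real.sqrt t - 1)]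

lemma measurable_mulVec {a b : Type*} [Fintype a] [Fintype b]
    (A : Matrix a b ℝ) {Ω : Type*} [MeasurableSpace Ω] {w : Ω → b → ℝ}
    (hw : Measurable w) : Measurable fun ω => A.mulVec (w ω) := by
  apply measurable_pi_lambda
  intro i
  simp only [Matrix.mulVec, dotProduct]
  exact Finset.measurable_sum _ fun j _ => measurable_const.mul ((measurable_pi_apply j).comp hw)

lemma frobNorm_nonneg {m n : Type*} [Fintype m] [Fintype n] (A : Matrix m n ℝ) :
    0 ≤ frobNorm A := Real.sqrt_nonneg _

lemma abs_le_entryMax {m n : Type*} [Fintype m] [Fintype n]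
    (A : Matrix m n ℝ) (i : m) (j : n) : |A i j| ≤ entryMax A := by
  calc |A i j| ≤ ⨆ j', |A i j'| := le_ciSup (f := fun j' => |A i j'|) (Set.Finite.bddAbove (Set.finite_range _)) j
  _ ≤ entryMax A :=
      le_ciSup (f := fun i' => ⨆ j', |A i' j'|) (Set.Finite.bddAbove (Set.finite_range _)) i

lemma entryMax_nonneg {m n : Type*} [Fintype m] [Fintype n] [Nonempty m] [Nonempty n]
    (A : Matrix m n ℝ) : 0 ≤ entryMax A :=
  le_trans (abs_nonneg _) (abs_le_entryMax A (Classical.arbitrary m) (Classical.arbitrary n))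

lemma entryMax_le_frobNorm {m n : Type*} [Fintype m] [Fintype n] [Nonempty m] [Nonempty n]
    (A : Matrix m n ℝ) : entryMax A ≤ frobNorm A := by
  refine ciSup_le fun i => ciSup_le fun j => ?_
  rw [frobNorm, ← Real.sqrt_sq (abs_nonneg (A i j)), sq_abs]
  apply Real.sqrt_le_sqrt
  calc (A i j)^2 ≤ ∑ j', (A i j')^2 :=
        Finset.single_le_sum (f := fun j' => (A i j')^2) (fun j' _ => sq_nonneg _) (Finset.mem_univ j)
  _ ≤ ∑ i', ∑ j', (A i' j')^2 :=
        Finset.single_le_sum (f := fun i' => ∑ j', (A i' j')^2) (fun i' _ => Finset.sum_nonneg fun j' _ => sq_nonneg _)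
          (Finset.mem_univ i)

lemma frobNorm_le_sqrt_card_mul_entryMax {m n : Type*} [Fintype m] [Fintype n]
    [Nonempty m] [Nonempty n] (A : Matrix m n ℝ) :
    frobNorm A ≤ Real.sqrt (Fintype.card m * Fintype.card n) * entryMax A := by
  have hE : 0 ≤ entryMax A := entryMax_nonneg A
  have h : ∑ i, ∑ j, (A i j)^2 ≤ (Fintype.card m * Fintype.card n) * (entryMax A)^2 := by
    calc ∑ i, ∑ j, (A i j)^2 ≤ ∑ _i : m, ∑ _j : n, (entryMax A)^2 := by
          refine Finset.sum_le_sum fun i _ => Finset.sum_le_sum fun j _ => ?_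
          rw [← sq_abs (A i j)]
          exact pow_le_pow_left₀ (abs_nonneg _) (abs_le_entryMax A i j) 2
    _ = (Fintype.card m * Fintype.card n) * (entryMax A)^2 := by
          simp [Finset.sum_const, mul_assoc]
  calc frobNorm A ≤ Real.sqrt ((Fintype.card m * Fintype.card n) * (entryMax A)^2) :=
        Real.sqrt_le_sqrt h
  _ = Real.sqrt (Fintype.card m * Fintype.card n) * entryMax A := by
        rw [Real.sqrt_mul (by positivity), Real.sqrt_sq hE]

lemma sqrt_mul_invsqrt {q : ℕ} {V Vsqrt Vinvsqrt : Matrix (Fin q) (Fin q) ℝ}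
    (hV : V.PosDef) (hVsqrtPSD : Vsqrt.PosSemidef) (hVsqrt : Vsqrt * Vsqrt = V)
    (hVinvsqrtPSD : Vinvsqrt.PosSemidef) (hVinvsqrt : Vinvsqrt * Vinvsqrt = V⁻¹) :
    Vsqrt * Vinvsqrt = 1 := by
  have hVsqrtPD : Vsqrt.PosDef := posDef_of_sq hVsqrtPSD (hVsqrt ▸ hV)
  have hinv : Vinvsqrt = Vsqrt⁻¹ := by
    open scoped MatrixOrder in refine (CFC.sq_eq_sq_iff Vinvsqrt Vsqrt⁻¹ hVinvsqrtPSD.nonneg hVsqrtPD.inv.posSemidef.nonneg).mp ?_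
    rw [pow_two, pow_two, hVinvsqrt, ← Matrix.mul_inv_rev, hVsqrt]
  rw [hinv, Matrix.mul_nonsing_inv _ (Matrix.isUnit_iff_isUnit_det _ |>.mp hVsqrtPD.isUnit)]

lemma c_continuous {dx du : ℕ} (c : (Fin dx → ℝ) → (Fin du → ℝ) → ℝ)
    (hc : ∀ x u x' u', |c x u - c x' u'| ≤
      Real.sqrt ((∑ i, (x i - x' i) ^ 2) + ∑ j, (u j - u' j) ^ 2)) :
    Continuous fun p : (Fin dx → ℝ) × (Fin du → ℝ) => c p.1 p.2 := by
  have hlip : LipschitzWith (Real.toNNReal (Real.sqrt (dx + du)))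
      (fun p : (Fin dx → ℝ) × (Fin du → ℝ) => c p.1 p.2) := by
    apply LipschitzWith.of_dist_le_mul
    intro p p'
    rw [Real.dist_eq, Real.coe_toNNReal _ (Real.sqrt_nonneg _)]
    have hd : (0:ℝ) ≤ dist p p' := dist_nonneg
    calc |c p.1 p.2 - c p'.1 p'.2|
        ≤ Real.sqrt ((∑ i, (p.1 i - p'.1 i)^2) + ∑ j, (p.2 j - p'.2 j)^2) := hc _ _ _ _
    _ ≤ Real.sqrt (((dx : ℝ) + du) * dist p p'^2) := by
        apply Real.sqrt_le_sqrt
        have h1 : ∀ i, (p.1 i - p'.1 i)^2 ≤ dist p p'^2 := by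
          intro i
          have hle : |p.1 i - p'.1 i| ≤ dist p p' :=
            (Real.dist_eq _ _ ▸ dist_le_pi_dist p.1 p'.1 i).trans (by rw [Prod.dist_eq]; exact le_max_left _ _)
          calc (p.1 i - p'.1 i)^2 = |p.1 i - p'.1 i|^2 := (sq_abs _).symm
          _ ≤ dist p p'^2 := pow_le_pow_left₀ (abs_nonneg _) hle 2
        have h2 : ∀ j, (p.2 j - p'.2 j)^2 ≤ dist p p'^2 := by
          intro j
          have hle : |p.2 j - p'.2 j| ≤ dist p p' :=
            (Real.dist_eq _ _ ▸ dist_le_pi_dist p.2 p'.2 j).trans (by rw [Prod.dist_eq]; exact le_max_right _ _)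
          calc (p.2 j - p'.2 j)^2 = |p.2 j - p'.2 j|^2 := (sq_abs _).symm
          _ ≤ dist p p'^2 := pow_le_pow_left₀ (abs_nonneg _) hle 2
        have s1 : ∑ i, (p.1 i - p'.1 i)^2 ≤ (dx : ℝ) * dist p p'^2 := by
          calc ∑ i, (p.1 i - p'.1 i)^2 ≤ ∑ _i : Fin dx, dist p p'^2 :=
                Finset.sum_le_sum fun i _ => h1 i
          _ = (dx : ℝ) * dist p p'^2 := by simp
        have s2 : ∑ j, (p.2 j - p'.2 j)^2 ≤ (du : ℝ) * dist p p'^2 := by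
          calc ∑ j, (p.2 j - p'.2 j)^2 ≤ ∑ _j : Fin du, dist p p'^2 :=
                Finset.sum_le_sum fun j _ => h2 j
          _ = (du : ℝ) * dist p p'^2 := by simp
        linarith
    _ = Real.sqrt ((dx : ℝ) + du) * dist p p' := by
        rw [Real.sqrt_mul (by positivity), Real.sqrt_sq hd]
  exact hlip.continuous


/-- Expected optimism bounds: with `Δ = Ψ⋆ − Ψ`,
`f(w) = c(Ψ⋆ P w + ζ(w), U(w))` and
`f̄(w) = c(Ψ P w + ζ(w), U(w)) − α ‖V^{−1/2} P S^{1/2}‖_∞`: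
(i) `E|c(Ψ P w + ζ(w), U(w)) − f(w)| ≤ ‖Δ V^{1/2}‖ ‖V^{−1/2} P S^{1/2}‖_F
      ≤ √(qm) ‖Δ V^{1/2}‖ ‖V^{−1/2} P S^{1/2}‖_∞`,
(ii) `E[f̄(w) − f(w)] ≤ (√(qm) ‖Δ V^{1/2}‖ − α) ‖V^{−1/2} P S^{1/2}‖_∞`, and
(iii) `E[f(w) − f̄(w)] ≤ (√(qm) ‖Δ V^{1/2}‖ + α) ‖V^{−1/2} P S^{1/2}‖_F`. -/
theorem expected_optimism_bounds
    {Ω : Type*} [MeasurableSpace Ω] (μ : Measure Ω) [IsProbabilityMeasure μ]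
    (q m dx du : ℕ) (hq : 1 ≤ q) (hm : 1 ≤ m) (hdx : 1 ≤ dx) (hdu : 1 ≤ du)
    (c : (Fin dx → ℝ) → (Fin du → ℝ) → ℝ)
    (hc : ∀ x u x' u', |c x u - c x' u'| ≤
      Real.sqrt ((∑ i, (x i - x' i) ^ 2) + ∑ j, (u j - u' j) ^ 2))
    (P : Matrix (Fin q) (Fin m) ℝ) (Ψ Ψstar : Matrix (Fin dx) (Fin q) ℝ)
    (V : Matrix (Fin q) (Fin q) ℝ) (hV : V.PosDef)
    (α : ℝ) (hα : 0 ≤ α)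
    (w : Ω → Fin m → ℝ) (hwmeas : Measurable w)
    (hwint : Integrable (fun ω => ∑ i, (w ω i) ^ 2) μ)
    (S : Matrix (Fin m) (Fin m) ℝ) (hS : ∀ i j, S i j = ∫ ω, w ω i * w ω j ∂μ)
    (Ssqrt : Matrix (Fin m) (Fin m) ℝ)
    (hSsqrtPSD : Ssqrt.PosSemidef) (hSsqrt : Ssqrt * Ssqrt = S)
    (Vsqrt : Matrix (Fin q) (Fin q) ℝ)
    (hVsqrtPSD : Vsqrt.PosSemidef) (hVsqrt : Vsqrt * Vsqrt = V)
    (Vinvsqrt : Matrix (Fin q) (Fin q) ℝ)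
    (hVinvsqrtPSD : Vinvsqrt.PosSemidef) (hVinvsqrt : Vinvsqrt * Vinvsqrt = V⁻¹)
    (ζ : (Fin m → ℝ) → Fin dx → ℝ) (hζ : Measurable ζ)
    (U : (Fin m → ℝ) → Fin du → ℝ) (hU : Measurable U) :
    ((∫ ω, |c ((Ψ * P).mulVec (w ω) + ζ (w ω)) (U (w ω)) -
            c ((Ψstar * P).mulVec (w ω) + ζ (w ω)) (U (w ω))| ∂μ ≤
        specNorm ((Ψstar - Ψ) * Vsqrt) * frobNorm (Vinvsqrt * P * Ssqrt)) ∧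
      specNorm ((Ψstar - Ψ) * Vsqrt) * frobNorm (Vinvsqrt * P * Ssqrt) ≤
        Real.sqrt (q * m) * specNorm ((Ψstar - Ψ) * Vsqrt) *
          entryMax (Vinvsqrt * P * Ssqrt)) ∧
    (∫ ω, ((c ((Ψ * P).mulVec (w ω) + ζ (w ω)) (U (w ω)) -
            α * entryMax (Vinvsqrt * P * Ssqrt)) -
          c ((Ψstar * P).mulVec (w ω) + ζ (w ω)) (U (w ω))) ∂μ ≤
      (Real.sqrt (q * m) * specNorm ((Ψstar - Ψ) * Vsqrt) - α) *
        entryMax (Vinvsqrt * P * Ssqrt)) ∧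
    (∫ ω, (c ((Ψstar * P).mulVec (w ω) + ζ (w ω)) (U (w ω)) -
          (c ((Ψ * P).mulVec (w ω) + ζ (w ω)) (U (w ω)) -
            α * entryMax (Vinvsqrt * P * Ssqrt))) ∂μ ≤
      (Real.sqrt (q * m) * specNorm ((Ψstar - Ψ) * Vsqrt) + α) *
        frobNorm (Vinvsqrt * P * Ssqrt)) := by
  haveI : Nonempty (Fin q) := Fin.pos_iff_nonempty.mp hq
  haveI : Nonempty (Fin m) := Fin.pos_iff_nonempty.mp hm
  set T : Matrix (Fin q) (Fin m) ℝ := Vinvsqrt * P with hT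
  set sp : ℝ := specNorm ((Ψstar - Ψ) * Vsqrt) with hspdef
  set F : ℝ := frobNorm (T * Ssqrt) with hFdef
  set E : ℝ := entryMax (T * Ssqrt) with hEdef
  have hsp0 : 0 ≤ sp := specNorm_nonneg _
  have hF0 : 0 ≤ F := frobNorm_nonneg _
  have hE0 : 0 ≤ E := entryMax_nonneg _
  have hVV : Vsqrt * Vinvsqrt = 1 :=
    sqrt_mul_invsqrt hV hVsqrtPSD hVsqrt hVinvsqrtPSD hVinvsqrt
  have hfact : (Ψstar - Ψ) * P = ((Ψstar - Ψ) * Vsqrt) * T := by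
    rw [hT, ← Matrix.mul_assoc, Matrix.mul_assoc (Ψstar - Ψ), hVV, Matrix.mul_one]
  set g : Ω → ℝ := fun ω => Real.sqrt (∑ i, (T.mulVec (w ω) i)^2) with hgdef
  have hg0 : ∀ ω, 0 ≤ g ω := fun ω => Real.sqrt_nonneg _
  -- pointwise Lipschitz bound
  have hpt : ∀ ω, |c ((Ψ * P).mulVec (w ω) + ζ (w ω)) (U (w ω)) -
      c ((Ψstar * P).mulVec (w ω) + ζ (w ω)) (U (w ω))| ≤ sp * g ω := by
    intro ω
    calc |c ((Ψ * P).mulVec (w ω) + ζ (w ω)) (U (w ω)) -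
        c ((Ψstar * P).mulVec (w ω) + ζ (w ω)) (U (w ω))|
        ≤ Real.sqrt ((∑ i, (((Ψ * P).mulVec (w ω) + ζ (w ω)) i -
            ((Ψstar * P).mulVec (w ω) + ζ (w ω)) i)^2) +
            ∑ j, (U (w ω) j - U (w ω) j)^2) := hc _ _ _ _
    _ = Real.sqrt (∑ i, (((Ψstar - Ψ) * P).mulVec (w ω) i)^2) := by
        congr 1
        have h0 : ∑ j, (U (w ω) j - U (w ω) j)^2 = (0:ℝ) := by simp
        have hterm : ∀ i : Fin dx, (((Ψ * P).mulVec (w ω) + ζ (w ω)) i -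
            ((Ψstar * P).mulVec (w ω) + ζ (w ω)) i)^2 =
            (((Ψstar - Ψ) * P).mulVec (w ω) i)^2 := by
          intro i
          simp only [Matrix.sub_mul, Matrix.sub_mulVec, Pi.add_apply, Pi.sub_apply]
          ring
        rw [h0, add_zero]
        exact Finset.sum_congr rfl fun i _ => hterm i
    _ = Real.sqrt (∑ i, (((Ψstar - Ψ) * Vsqrt).mulVec (T.mulVec (w ω)) i)^2) := by
        rw [hfact, ← Matrix.mulVec_mulVec]
    _ ≤ sp * g ω := mulVec_norm_le _ _
  -- measurability
  have hTwmeas : Measurable fun ω => T.mulVec (w ω) := measurable_mulVec T hwmeas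
  have hgmeas : Measurable g :=
    Real.continuous_sqrt.measurable.comp
      (Finset.measurable_sum _ fun i _ => ((measurable_pi_apply i).comp hTwmeas).pow_const 2)
  have hccont := c_continuous c hc
  have hX1 : Measurable fun ω => (Ψ * P).mulVec (w ω) + ζ (w ω) :=
    (measurable_mulVec _ hwmeas).add (hζ.comp hwmeas)
  have hX2 : Measurable fun ω => (Ψstar * P).mulVec (w ω) + ζ (w ω) :=
    (measurable_mulVec _ hwmeas).add (hζ.comp hwmeas)
  have hc1meas : Measurable fun ω => c ((Ψ * P).mulVec (w ω) + ζ (w ω)) (U (w ω)) :=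
    hccont.measurable.comp (hX1.prodMk (hU.comp hwmeas))
  have hc2meas : Measurable fun ω => c ((Ψstar * P).mulVec (w ω) + ζ (w ω)) (U (w ω)) :=
    hccont.measurable.comp (hX2.prodMk (hU.comp hwmeas))
  -- integrability of g
  have hgint : Integrable g μ := by
    refine (((integrable_const (1:ℝ)).add hwint).const_mul (specNorm T)).mono'
      hgmeas.aestronglyMeasurable (ae_of_all _ fun ω => ?_)
    rw [Real.norm_eq_abs, abs_of_nonneg (hg0 ω)]
    calc g ω ≤ specNorm T * Real.sqrt (∑ i, (w ω i)^2) := mulVec_norm_le T (w ω)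
    _ ≤ specNorm T * (1 + ∑ i, (w ω i)^2) :=
        mul_le_mul_of_nonneg_left
          (sqrt_le_one_add (Finset.sum_nonneg fun i _ => sq_nonneg _)) (specNorm_nonneg _)
  -- integrability of products
  have hprod : ∀ j k, Integrable (fun ω => w ω j * w ω k) μ := by
    intro j k
    refine hwint.mono' (((measurable_pi_apply j).comp hwmeas).mul
      ((measurable_pi_apply k).comp hwmeas)).aestronglyMeasurable (ae_of_all _ fun ω => ?_)
    rw [Real.norm_eq_abs]
    have h1 : (w ω j)^2 ≤ ∑ i, (w ω i)^2 :=
      Finset.single_le_sum (f := fun i => (w ω i)^2) (fun i _ => sq_nonneg _) (Finset.mem_univ j)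
    have h2 : (w ω k)^2 ≤ ∑ i, (w ω i)^2 :=
      Finset.single_le_sum (f := fun i => (w ω i)^2) (fun i _ => sq_nonneg _) (Finset.mem_univ k)
    have h3 : |w ω j * w ω k| ≤ ((w ω j)^2 + (w ω k)^2) / 2 := by
      rw [abs_mul]
      nlinarith [sq_nonneg (|w ω j| - |w ω k|), sq_abs (w ω j), sq_abs (w ω k),
        abs_nonneg (w ω j), abs_nonneg (w ω k)]
    linarith
  -- g² expansion
  have hg2eq : ∀ ω, (g ω)^2 = ∑ i, ∑ j, ∑ k, (T i j * T i k) * (w ω j * w ω k) := by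
    intro ω
    rw [hgdef, Real.sq_sqrt (Finset.sum_nonneg fun i _ => sq_nonneg _)]
    refine Finset.sum_congr rfl fun i _ => ?_
    calc (T.mulVec (w ω) i)^2 = (∑ j, T i j * w ω j) * (∑ k, T i k * w ω k) := by
          simp [Matrix.mulVec, dotProduct, pow_two]
    _ = ∑ j, ∑ k, (T i j * w ω j) * (T i k * w ω k) := Finset.sum_mul_sum _ _ _ _
    _ = ∑ j, ∑ k, (T i j * T i k) * (w ω j * w ω k) := by
          refine Finset.sum_congr rfl fun j _ => Finset.sum_congr rfl fun k _ => by ring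
  have hg2fun : (fun ω => (g ω)^2) =
      fun ω => ∑ i, ∑ j, ∑ k, (T i j * T i k) * (w ω j * w ω k) := funext hg2eq
  have hg2int : Integrable (fun ω => (g ω)^2) μ := by
    rw [hg2fun]
    exact integrable_finset_sum _ fun i _ => integrable_finset_sum _ fun j _ =>
      integrable_finset_sum _ fun k _ => (hprod j k).const_mul _
  have hg2val : ∫ ω, (g ω)^2 ∂μ = ∑ i, ∑ j, ∑ k, (T i j * T i k) * S j k := by
    rw [hg2fun, integral_finset_sum _ (fun i _ => integrable_finset_sum _ fun j _ =>
      integrable_finset_sum _ fun k _ => (hprod j k).const_mul _)]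
    refine Finset.sum_congr rfl fun i _ => ?_
    rw [integral_finset_sum _ (fun j _ =>
      integrable_finset_sum _ fun k _ => (hprod j k).const_mul _)]
    refine Finset.sum_congr rfl fun j _ => ?_
    rw [integral_finset_sum _ (fun k _ => (hprod j k).const_mul _)]
    refine Finset.sum_congr rfl fun k _ => ?_
    rw [integral_const_mul, hS j k]
  -- Frobenius identity
  have hsym : ∀ j k, Ssqrt j k = Ssqrt k j := by
    intro j k
    conv_lhs => rw [← hSsqrtPSD.1]
    simp [Matrix.conjTranspose_apply]
  have hFsq : F^2 = ∑ i, ∑ j, ∑ k, (T i j * T i k) * S j k := by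
    rw [hFdef, frobNorm, Real.sq_sqrt (by positivity)]
    refine Finset.sum_congr rfl fun i _ => ?_
    calc ∑ l, ((T * Ssqrt) i l)^2
        = ∑ l, (∑ j, T i j * Ssqrt j l) * (∑ k, T i k * Ssqrt k l) := by
          simp [Matrix.mul_apply, pow_two]
    _ = ∑ l, ∑ j, ∑ k, (T i j * Ssqrt j l) * (T i k * Ssqrt k l) := by
          refine Finset.sum_congr rfl fun l _ => Finset.sum_mul_sum _ _ _ _
    _ = ∑ j, ∑ l, ∑ k, (T i j * Ssqrt j l) * (T i k * Ssqrt k l) := Finset.sum_comm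
    _ = ∑ j, ∑ k, ∑ l, (T i j * Ssqrt j l) * (T i k * Ssqrt k l) :=
          Finset.sum_congr rfl fun j _ => Finset.sum_comm
    _ = ∑ j, ∑ k, (T i j * T i k) * (∑ l, Ssqrt j l * Ssqrt l k) := by
          refine Finset.sum_congr rfl fun j _ => Finset.sum_congr rfl fun k _ => ?_
          rw [Finset.mul_sum]
          refine Finset.sum_congr rfl fun l _ => ?_
          rw [hsym k l]; ring
    _ = ∑ j, ∑ k, (T i j * T i k) * S j k := by
          refine Finset.sum_congr rfl fun j _ => Finset.sum_congr rfl fun k _ => ?_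
          rw [← hSsqrt, Matrix.mul_apply]
  have hJ : ∫ ω, g ω ∂μ ≤ F := by
    have h := jensen_sqrt μ g hg0 hgint hg2int
    rwa [hg2val, ← hFsq, Real.sqrt_sq hF0] at h
  -- integrability of the difference
  have hdiffmeas : Measurable fun ω => c ((Ψ * P).mulVec (w ω) + ζ (w ω)) (U (w ω)) -
      c ((Ψstar * P).mulVec (w ω) + ζ (w ω)) (U (w ω)) := hc1meas.sub hc2meas
  have hdiffint : Integrable (fun ω => c ((Ψ * P).mulVec (w ω) + ζ (w ω)) (U (w ω)) -
      c ((Ψstar * P).mulVec (w ω) + ζ (w ω)) (U (w ω))) μ :=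
    (hgint.const_mul sp).mono' hdiffmeas.aestronglyMeasurable
      (ae_of_all _ fun ω => by rw [Real.norm_eq_abs]; exact hpt ω)
  -- part (i) first inequality
  have habs : ∫ ω, |c ((Ψ * P).mulVec (w ω) + ζ (w ω)) (U (w ω)) -
      c ((Ψstar * P).mulVec (w ω) + ζ (w ω)) (U (w ω))| ∂μ ≤ sp * F := by
    calc ∫ ω, |c ((Ψ * P).mulVec (w ω) + ζ (w ω)) (U (w ω)) -
        c ((Ψstar * P).mulVec (w ω) + ζ (w ω)) (U (w ω))| ∂μ
        ≤ ∫ ω, sp * g ω ∂μ := integral_mono hdiffint.abs (hgint.const_mul sp) hpt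
    _ = sp * ∫ ω, g ω ∂μ := integral_const_mul _ _
    _ ≤ sp * F := mul_le_mul_of_nonneg_left hJ hsp0
  -- part (i) second inequality
  have hFE : F ≤ Real.sqrt (q * m) * E := by
    have h := frobNorm_le_sqrt_card_mul_entryMax (T * Ssqrt)
    simpa [Fintype.card_fin] using h
  have hspFE : sp * F ≤ Real.sqrt (q * m) * sp * E := by
    calc sp * F ≤ sp * (Real.sqrt (q * m) * E) := mul_le_mul_of_nonneg_left hFE hsp0
    _ = Real.sqrt (q * m) * sp * E := by ring
  refine ⟨⟨habs, hspFE⟩, ?_, ?_⟩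
  · -- part (ii)
    have hint1 : ∫ ω, (c ((Ψ * P).mulVec (w ω) + ζ (w ω)) (U (w ω)) -
        c ((Ψstar * P).mulVec (w ω) + ζ (w ω)) (U (w ω))) ∂μ ≤ sp * F := by
      refine le_trans (integral_mono hdiffint hdiffint.abs fun ω => le_abs_self _) habs
    calc ∫ ω, ((c ((Ψ * P).mulVec (w ω) + ζ (w ω)) (U (w ω)) - α * E) -
          c ((Ψstar * P).mulVec (w ω) + ζ (w ω)) (U (w ω))) ∂μ
        = ∫ ω, ((c ((Ψ * P).mulVec (w ω) + ζ (w ω)) (U (w ω)) -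
          c ((Ψstar * P).mulVec (w ω) + ζ (w ω)) (U (w ω))) - α * E) ∂μ :=
          integral_congr_ae (ae_of_all _ fun ω => by ring)
    _ = (∫ ω, (c ((Ψ * P).mulVec (w ω) + ζ (w ω)) (U (w ω)) -
          c ((Ψstar * P).mulVec (w ω) + ζ (w ω)) (U (w ω))) ∂μ) - α * E := by
          rw [integral_sub hdiffint (integrable_const _), integral_const]; simp
    _ ≤ (Real.sqrt (q * m) * sp - α) * E := by nlinarith
  · -- part (iii)
    have hdiffint' : Integrable (fun ω => c ((Ψstar * P).mulVec (w ω) + ζ (w ω)) (U (w ω)) -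
        c ((Ψ * P).mulVec (w ω) + ζ (w ω)) (U (w ω))) μ :=
      (hgint.const_mul sp).mono' (hc2meas.sub hc1meas).aestronglyMeasurable
        (ae_of_all _ fun ω => by rw [Real.norm_eq_abs, abs_sub_comm]; exact hpt ω)
    have hint2 : ∫ ω, (c ((Ψstar * P).mulVec (w ω) + ζ (w ω)) (U (w ω)) -
        c ((Ψ * P).mulVec (w ω) + ζ (w ω)) (U (w ω))) ∂μ ≤ sp * F := by
      refine le_trans (integral_mono hdiffint' hdiffint.abs fun ω => ?_) habs
      rw [abs_sub_comm]
      exact le_abs_self _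
    have hEF : E ≤ F := entryMax_le_frobNorm _
    have hsqrt1 : (1:ℝ) ≤ Real.sqrt (q * m) := by
      rw [show (1:ℝ) = Real.sqrt 1 from (Real.sqrt_one).symm]
      apply Real.sqrt_le_sqrt
      have : (1:ℕ) ≤ q * m := Nat.one_le_iff_ne_zero.mpr (by positivity)
      exact_mod_cast this
    calc ∫ ω, (c ((Ψstar * P).mulVec (w ω) + ζ (w ω)) (U (w ω)) -
          (c ((Ψ * P).mulVec (w ω) + ζ (w ω)) (U (w ω)) - α * E)) ∂μ
        = ∫ ω, ((c ((Ψstar * P).mulVec (w ω) + ζ (w ω)) (U (w ω)) -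
          c ((Ψ * P).mulVec (w ω) + ζ (w ω)) (U (w ω))) + α * E) ∂μ :=
          integral_congr_ae (ae_of_all _ fun ω => by ring)
    _ = (∫ ω, (c ((Ψstar * P).mulVec (w ω) + ζ (w ω)) (U (w ω)) -
          c ((Ψ * P).mulVec (w ω) + ζ (w ω)) (U (w ω))) ∂μ) + α * E := by
          rw [integral_add hdiffint' (integrable_const _), integral_const]; simp
    _ ≤ (Real.sqrt (q * m) * sp + α) * F := by
          have k1 : sp * F ≤ Real.sqrt (q * m) * sp * F := by
            nlinarith [mul_le_mul_of_nonneg_right hsqrt1 (mul_nonneg hsp0 hF0)]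
          have k2 : α * E ≤ α * F := mul_le_mul_of_nonneg_left hEF hα
          linarith [hint2]
end
end
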